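/- arXiv:2308.02584 — 8 statements merged into one kernel-verified Lean document; each statement's English description precedes it below -/
import Mathlib

section
/- The second-period value function f : 2^{E⃗} → ℝ, defined by f(B) = ∑_{ℓ∈I∪J} max{ ∑_{ℓ'∈S} φ²_{ℓ,ℓ'} : S ⊆ B_ℓ, |S| ≤ K_ℓ }, is monotone and submodular: f(B) ≤ f(B') whenever B ⊆ B' ⊆ E⃗, and f(B∪{a}) − f(B) ≥ f(B'∪{a}) − f(B') whenever B ⊆ B' ⊆ E⃗ and a ∈ E⃗∖B'. -/
open scoped Classical
noncomputable section

/-- The set of directed arcs between the two sides `I` and `J`. -/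
abbrev Arc (I J : Type*) := (I × J) ⊕ (J × I)

/-- Reversal of a directed arc. -/
def arcRev {I J : Type*} : Arc I J → Arc I J
  | Sum.inl (i, j) => Sum.inr (j, i)
  | Sum.inr (j, i) => Sum.inl (i, j)

/-- Source (tail) of a directed arc. -/
def arcSrc {I J : Type*} : Arc I J → I ⊕ J
  | Sum.inl (i, _) => Sum.inl i
  | Sum.inr (j, _) => Sum.inr j

/-- Out-degree of a user in a set of arcs. -/
def outdegX {I J : Type*} (X : Finset (Arc I J)) (l : I ⊕ J) : ℕ :=
  (X.filter fun a => arcSrc a = l).card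

/-- Number of displayed unordered pairs containing a given user. -/
def wdeg {I J : Type*} (W : Finset (I × J)) : I ⊕ J → ℕ
  | Sum.inl i => (W.filter fun e => e.1 = i).card
  | Sum.inr j => (W.filter fun e => e.2 = j).card

/-- `max { ∑_{x ∈ S} φ x : S ⊆ s, |S| ≤ K }`. -/
def bestSum {α : Type*} (s : Finset α) (K : ℕ) (φ : α → ℝ) : ℝ :=
  (s.powerset.filter fun S => S.card ≤ K).sup' ⟨∅, by simp⟩ fun S => ∑ x ∈ S, φ x

/-- Backlog of a user `i ∈ I` in a set of arcs `B`. -/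
def backlogI {I J : Type*} [Fintype J] (B : Finset (Arc I J)) (i : I) : Finset J :=
  Finset.univ.filter fun j => Sum.inr (j, i) ∈ B

/-- Backlog of a user `j ∈ J` in a set of arcs `B`. -/
def backlogJ {I J : Type*} [Fintype I] (B : Finset (Arc I J)) (j : J) : Finset I :=
  Finset.univ.filter fun i => Sum.inl (i, j) ∈ B

/-- The second-period (sequential) value function `f`. -/
def fval {I J : Type*} [Fintype I] [Fintype J] (φ2 : Arc I J → ℝ) (K : I ⊕ J → ℕ)
    (B : Finset (Arc I J)) : ℝ :=
  (∑ i : I, bestSum (backlogI B i) (K (Sum.inl i)) fun j => φ2 (Sum.inl (i, j))) +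
  ∑ j : J, bestSum (backlogJ B j) (K (Sum.inr j)) fun i => φ2 (Sum.inr (j, i))

/-- Probability that the realized backlog is exactly `B`, given displayed arcs `x`. -/
def probOf {I J : Type*} [Fintype I] [Fintype J] (φ1 : Arc I J → ℝ)
    (x : Finset (Arc I J)) (B : Finset (Arc I J)) : ℝ :=
  (∏ a ∈ B, (if a ∈ x then φ1 a else 0)) *
    ∏ a ∈ Bᶜ, (1 - if a ∈ x then φ1 a else 0)

/-- Expected number of second-period (sequential) matches. -/
def M2 {I J : Type*} [Fintype I] [Fintype J] (φ1 φ2 : Arc I J → ℝ) (K : I ⊕ J → ℕ)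
    (x : Finset (Arc I J)) : ℝ :=
  ∑ B : Finset (Arc I J), fval φ2 K B * probOf φ1 x B

lemma le_bestSum {α : Type*} (s : Finset α) (K : ℕ) (φ : α → ℝ) {S : Finset α}
    (hS : S ⊆ s) (hc : S.card ≤ K) : ∑ x ∈ S, φ x ≤ bestSum s K φ :=
  Finset.le_sup' (f := fun S => ∑ x ∈ S, φ x)
    (by simp [Finset.mem_filter, Finset.mem_powerset, hS, hc])

lemma bestSum_exists {α : Type*} (s : Finset α) (K : ℕ) (φ : α → ℝ) :
    ∃ S, S ⊆ s ∧ S.card ≤ K ∧ bestSum s K φ = ∑ x ∈ S, φ x := by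
  obtain ⟨S, hS, hEq⟩ := Finset.exists_mem_eq_sup'
    (⟨∅, by simp⟩ : (s.powerset.filter fun S => S.card ≤ K).Nonempty)
    (fun S => ∑ x ∈ S, φ x)
  simp only [Finset.mem_filter, Finset.mem_powerset] at hS
  exact ⟨S, hS.1, hS.2, hEq⟩

lemma bestSum_mono {α : Type*} {s t : Finset α} (h : s ⊆ t) (K : ℕ) (φ : α → ℝ) :
    bestSum s K φ ≤ bestSum t K φ := by
  apply Finset.sup'_le
  intro S hS
  simp only [Finset.mem_filter, Finset.mem_powerset] at hS
  exact le_bestSum t K φ (hS.1.trans h) hS.2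

lemma bestSum_submod {α : Type*} {s t : Finset α} {x : α} (hst : s ⊆ t) (hx : x ∉ t)
    (K : ℕ) (φ : α → ℝ) :
    bestSum (insert x t) K φ + bestSum s K φ ≤
      bestSum t K φ + bestSum (insert x s) K φ := by
  obtain ⟨T, hTsub, hTc, hT⟩ := bestSum_exists (insert x t) K φ
  obtain ⟨S, hSsub, hSc, hS⟩ := bestSum_exists s K φ
  rw [hT, hS]
  by_cases hxT : x ∈ T
  · have hT' : T.erase x ⊆ t := by
      intro y hy
      rcases Finset.mem_insert.1 (hTsub (Finset.mem_of_mem_erase hy)) with h | h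
      · exact absurd h (Finset.ne_of_mem_erase hy)
      · exact h
    have hxS : x ∉ S := fun h => hx (hst (hSsub h))
    have hsumT : ∑ y ∈ T, φ y = φ x + ∑ y ∈ T.erase x, φ y :=
      (Finset.add_sum_erase _ _ hxT).symm
    by_cases hSK : S.card < K
    · have h2 : ∑ y ∈ insert x S, φ y = φ x + ∑ y ∈ S, φ y := Finset.sum_insert hxS
      have hA := le_bestSum t K φ hT' ((Finset.card_erase_le).trans hTc)
      have hB := le_bestSum (insert x s) K φ
        (Finset.insert_subset_insert _ hSsub)
        (by rw [Finset.card_insert_of_notMem hxS]; omega)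
      rw [h2] at hB
      linarith
    · have hScard : S.card = K := le_antisymm hSc (not_lt.1 hSK)
      have hTcard : (T.erase x).card < S.card := by
        have h1 := Finset.card_erase_of_mem hxT
        have hT1 : 1 ≤ T.card := Finset.card_pos.2 ⟨x, hxT⟩
        omega
      obtain ⟨y, hyS, hyT⟩ := Finset.not_subset.1
        (fun h => absurd (Finset.card_le_card h) (not_le.2 hTcard))
      have hA := le_bestSum t K φ
        (Finset.insert_subset (hst (hSsub hyS)) hT')
        ((Finset.card_insert_le _ _).trans (by omega))
      have hB := le_bestSum (insert x s) K φ
        (Finset.insert_subset (Finset.mem_insert_self _ _)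
          ((Finset.erase_subset _ _).trans (hSsub.trans (Finset.subset_insert _ _))))
        (by
          rw [Finset.card_insert_of_notMem (fun h => hxS (Finset.mem_of_mem_erase h)),
            Finset.card_erase_of_mem hyS]; omega)
      have hsumA : ∑ z ∈ insert y (T.erase x), φ z = φ y + ∑ z ∈ T.erase x, φ z :=
        Finset.sum_insert hyT
      have hsumB : ∑ z ∈ insert x (S.erase y), φ z = φ x + ∑ z ∈ S.erase y, φ z :=
        Finset.sum_insert (fun h => hxS (Finset.mem_of_mem_erase h))
      have hsumS : ∑ z ∈ S, φ z = φ y + ∑ z ∈ S.erase y, φ z :=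
        (Finset.add_sum_erase _ _ hyS).symm
      rw [hsumA] at hA
      rw [hsumB] at hB
      linarith
  · have hTt : T ⊆ t := fun y hy => by
      rcases Finset.mem_insert.1 (hTsub hy) with h | h
      · exact absurd (h ▸ hy) hxT
      · exact h
    have hA := le_bestSum t K φ hTt hTc
    have hB := le_bestSum (insert x s) K φ (hSsub.trans (Finset.subset_insert _ _)) hSc
    linarith

lemma backlogI_mono {I J : Type*} [Fintype J] {B B' : Finset (Arc I J)} (h : B ⊆ B')
    (i : I) : backlogI B i ⊆ backlogI B' i := by
  intro j hj
  simp only [backlogI, Finset.mem_filter, Finset.mem_univ, true_and] at *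
  exact h hj

lemma backlogJ_mono {I J : Type*} [Fintype I] {B B' : Finset (Arc I J)} (h : B ⊆ B')
    (j : J) : backlogJ B j ⊆ backlogJ B' j := by
  intro i hi
  simp only [backlogJ, Finset.mem_filter, Finset.mem_univ, true_and] at *
  exact h hi

lemma sum_diff_single {β : Type*} [Fintype β] (g g' : β → ℝ) (b0 : β)
    (h : ∀ b, b ≠ b0 → g' b = g b) :
    (∑ b, g' b) - ∑ b, g b = g' b0 - g b0 := by
  rw [← Finset.sum_sub_distrib]
  exact Finset.sum_eq_single b0 (fun b _ hb => by rw [h b hb]; ring) (by simp)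

lemma fval_insert_diff_inl {I J : Type*} [Fintype I] [Fintype J] (φ2 : Arc I J → ℝ)
    (K : I ⊕ J → ℕ) (B : Finset (Arc I J)) (i0 : I) (j0 : J) :
    fval φ2 K (insert (Sum.inl (i0, j0)) B) - fval φ2 K B =
      bestSum (insert i0 (backlogJ B j0)) (K (Sum.inr j0)) (fun i => φ2 (Sum.inr (j0, i)))
        - bestSum (backlogJ B j0) (K (Sum.inr j0)) (fun i => φ2 (Sum.inr (j0, i))) := by
  have hI : ∀ i, backlogI (insert (Sum.inl (i0, j0)) B) i = backlogI B i := by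
    intro i; ext j; simp [backlogI]
  have hJne : ∀ j, j ≠ j0 → backlogJ (insert (Sum.inl (i0, j0)) B) j = backlogJ B j := by
    intro j hj; ext i
    simp only [backlogJ, Finset.mem_filter, Finset.mem_univ, true_and, Finset.mem_insert]
    constructor
    · rintro (h | h)
      · exact absurd (congrArg (fun a => a) h) (by simp [Prod.ext_iff]; tauto)
      · exact h
    · exact Or.inr
  have hJ0 : backlogJ (insert (Sum.inl (i0, j0)) B) j0 = insert i0 (backlogJ B j0) := by
    ext i
    simp only [backlogJ, Finset.mem_filter, Finset.mem_univ, true_and, Finset.mem_insert,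
      Sum.inl.injEq, Prod.mk.injEq]
    tauto
  unfold fval
  simp only [hI]
  have hsum := sum_diff_single
    (fun j => bestSum (backlogJ B j) (K (Sum.inr j)) fun i => φ2 (Sum.inr (j, i)))
    (fun j => bestSum (backlogJ (insert (Sum.inl (i0, j0)) B) j) (K (Sum.inr j))
      fun i => φ2 (Sum.inr (j, i))) j0
    (fun j hj => by simp only [hJne j hj])
  simp only [hJ0] at hsum
  linarith

lemma fval_insert_diff_inr {I J : Type*} [Fintype I] [Fintype J] (φ2 : Arc I J → ℝ)
    (K : I ⊕ J → ℕ) (B : Finset (Arc I J)) (j0 : J) (i0 : I) :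
    fval φ2 K (insert (Sum.inr (j0, i0)) B) - fval φ2 K B =
      bestSum (insert j0 (backlogI B i0)) (K (Sum.inl i0)) (fun j => φ2 (Sum.inl (i0, j)))
        - bestSum (backlogI B i0) (K (Sum.inl i0)) (fun j => φ2 (Sum.inl (i0, j))) := by
  have hJ : ∀ j, backlogJ (insert (Sum.inr (j0, i0)) B) j = backlogJ B j := by
    intro j; ext i; simp [backlogJ]
  have hIne : ∀ i, i ≠ i0 → backlogI (insert (Sum.inr (j0, i0)) B) i = backlogI B i := by
    intro i hi; ext j
    simp only [backlogI, Finset.mem_filter, Finset.mem_univ, true_and, Finset.mem_insert]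
    constructor
    · rintro (h | h)
      · exact absurd (congrArg (fun a => a) h) (by simp [Prod.ext_iff]; tauto)
      · exact h
    · exact Or.inr
  have hI0 : backlogI (insert (Sum.inr (j0, i0)) B) i0 = insert j0 (backlogI B i0) := by
    ext j
    simp only [backlogI, Finset.mem_filter, Finset.mem_univ, true_and, Finset.mem_insert,
      Sum.inr.injEq, Prod.mk.injEq]
    tauto
  unfold fval
  simp only [hJ]
  have hsum := sum_diff_single
    (fun i => bestSum (backlogI B i) (K (Sum.inl i)) fun j => φ2 (Sum.inl (i, j)))
    (fun i => bestSum (backlogI (insert (Sum.inr (j0, i0)) B) i) (K (Sum.inl i))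
      fun j => φ2 (Sum.inl (i, j))) i0
    (fun i hi => by simp only [hIne i hi])
  simp only [hI0] at hsum
  linarith

/-- the second-period value function `f` is monotone and submodular. -/
theorem fval_monotone_and_submodular
    {I J : Type*} [Fintype I] [Fintype J]
    (φ2 : Arc I J → ℝ) (hφ2 : ∀ a, 0 ≤ φ2 a ∧ φ2 a ≤ 1)
    (K : I ⊕ J → ℕ) :
    (∀ B B' : Finset (Arc I J), B ⊆ B' → fval φ2 K B ≤ fval φ2 K B') ∧
    (∀ B B' : Finset (Arc I J), B ⊆ B' → ∀ a ∉ B',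
      fval φ2 K (insert a B') - fval φ2 K B' ≤
        fval φ2 K (insert a B) - fval φ2 K B) := by
  constructor
  · intro B B' h
    unfold fval
    refine add_le_add (Finset.sum_le_sum fun i _ => ?_) (Finset.sum_le_sum fun j _ => ?_)
    · exact bestSum_mono (backlogI_mono h i) _ _
    · exact bestSum_mono (backlogJ_mono h j) _ _
  · intro B B' hBB' a haB'
    cases a with
    | inl p =>
      obtain ⟨i0, j0⟩ := p
      rw [fval_insert_diff_inl, fval_insert_diff_inl]
      have hs : backlogJ B j0 ⊆ backlogJ B' j0 := backlogJ_mono hBB' j0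
      have hxn : i0 ∉ backlogJ B' j0 := by
        simp only [backlogJ, Finset.mem_filter, Finset.mem_univ, true_and]
        exact haB'
      have := bestSum_submod hs hxn (K (Sum.inr j0)) (fun i => φ2 (Sum.inr (j0, i)))
      linarith
    | inr p =>
      obtain ⟨j0, i0⟩ := p
      rw [fval_insert_diff_inr, fval_insert_diff_inr]
      have hs : backlogI B i0 ⊆ backlogI B' i0 := backlogI_mono hBB' i0
      have hxn : j0 ∉ backlogI B' i0 := by
        simp only [backlogI, Finset.mem_filter, Finset.mem_univ, true_and]
        exact haB'
      have := bestSum_submod hs hxn (K (Sum.inl i0)) (fun j => φ2 (Sum.inl (i0, j)))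
      linarith
end
end

section
/- Let E be a finite set, p : E → [0,1], and f : 2^E → ℝ a nonnegative, monotone, submodular set function. Then the set function g defined on subsets A ⊆ E by g(A) = ∑_{B ⊆ A} f(B) · ∏_{e∈B} p(e) · ∏_{e∈A∖B} (1 − p(e)) is nonnegative, monotone, and submodular on 2^E. -/
/-!
`g(A)` is the expectation of `f(R)` for a random subset `R ⊆ A` containing each `e` independently
with probability `p e`. Conditioning on whether a new element `a` is drawn gives
`g(A ∪ {a}) = g(A) + p a · g_{Δ_a f}(A)`, where `Δ_a f (B) = f (B ∪ {a}) - f B` is the marginal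
gain of `a`. Since `g` is linear and positive in `f`, monotonicity of `f` (`Δ_a f ≥ 0`) makes `g`
monotone, and submodularity of `f` (`Δ_a f` antitone) makes `Δ_a g = p a · g_{Δ_a f}` antitone.
-/

open scoped Classical
noncomputable section

/-- The multilinear-type expectation `g(A) = ∑_{B ⊆ A} f(B) ∏_{e∈B} p e ∏_{e∈A∖B} (1 - p e)`. -/
def gval {E : Type*} (p : E → ℝ) (f : Finset E → ℝ) (A : Finset E) : ℝ :=
  ∑ B ∈ A.powerset, f B * (∏ e ∈ B, p e) * ∏ e ∈ A \ B, (1 - p e)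

section

variable {E : Type*}

def marginal (f : Finset E → ℝ) (a : E) (B : Finset E) : ℝ :=
  f (insert a B) - f B

theorem marginal_nonneg {f : Finset E → ℝ} (hf : Monotone f) (a : E) (B : Finset E) :
    0 ≤ marginal f a B :=
  sub_nonneg.mpr (hf (Finset.subset_insert a B))

theorem antitone_marginal {f : Finset E → ℝ} (hf : Monotone f)
    (hsub : ∀ B B' : Finset E, B ⊆ B' → ∀ a ∉ B',
      f (insert a B') - f B' ≤ f (insert a B) - f B) (a : E) :
    Antitone (marginal f a) := by
  refine Finset.antitone_iff_forall_insert_le.mpr fun B b _ => ?_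
  by_cases ha : a ∈ insert b B
  · rw [marginal, Finset.insert_eq_self.mpr ha, sub_self]
    exact marginal_nonneg hf a B
  · exact hsub B (insert b B) (Finset.subset_insert b B) a ha

variable {p : E → ℝ}

theorem gval_nonneg (hp : ∀ e, 0 ≤ p e ∧ p e ≤ 1) {f : Finset E → ℝ} (hf : ∀ B, 0 ≤ f B)
    (A : Finset E) : 0 ≤ gval p f A :=
  Finset.sum_nonneg fun B _ =>
    mul_nonneg (mul_nonneg (hf B) (Finset.prod_nonneg fun e _ => (hp e).1))
      (Finset.prod_nonneg fun e _ => sub_nonneg.mpr (hp e).2)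

theorem gval_neg (f : Finset E → ℝ) : gval p (-f) = -gval p f := by
  ext A
  simp [gval, Finset.sum_neg_distrib]

theorem gval_insert (f : Finset E → ℝ) {A : Finset E} {a : E} (ha : a ∉ A) :
    gval p f (insert a A) = gval p f A + p a * gval p (marginal f a) A := by
  have term : ∀ B ∈ A.powerset,
      f B * (∏ e ∈ B, p e) * ∏ e ∈ insert a A \ B, (1 - p e)
        + f (insert a B) * (∏ e ∈ insert a B, p e) * ∏ e ∈ insert a A \ insert a B, (1 - p e)
      = f B * (∏ e ∈ B, p e) * ∏ e ∈ A \ B, (1 - p e)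
        + p a * (marginal f a B * (∏ e ∈ B, p e) * ∏ e ∈ A \ B, (1 - p e)) := by
    intro B hB
    have haB : a ∉ B := fun h => ha (Finset.mem_powerset.mp hB h)
    have haAB : a ∉ A \ B := fun h => ha (Finset.mem_sdiff.mp h).1
    rw [Finset.insert_sdiff_of_notMem A haB, Finset.insert_sdiff_insert,
      Finset.sdiff_insert_of_notMem ha, Finset.prod_insert haAB, Finset.prod_insert haB, marginal]
    ring
  rw [gval, gval, gval, Finset.sum_powerset_insert ha, ← Finset.sum_add_distrib,
    Finset.sum_congr rfl term, Finset.sum_add_distrib, Finset.mul_sum]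

theorem monotone_gval (hp : ∀ e, 0 ≤ p e ∧ p e ≤ 1) {f : Finset E → ℝ} (hf : Monotone f) :
    Monotone (gval p f) :=
  Finset.monotone_iff_forall_le_insert.mpr fun A a ha => by
    rw [gval_insert f ha]
    exact le_add_of_nonneg_right <|
      mul_nonneg (hp a).1 (gval_nonneg hp (marginal_nonneg hf a) A)

theorem antitone_gval (hp : ∀ e, 0 ≤ p e ∧ p e ≤ 1) {f : Finset E → ℝ} (hf : Antitone f) :
    Antitone (gval p f) := by
  have h : Monotone (gval p (-f)) := monotone_gval hp hf.neg
  rw [gval_neg] at h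
  exact fun A B hAB => neg_le_neg_iff.mp (h hAB)

end

theorem gval_nonneg_monotone_submodular_general
    {E : Type*} (p : E → ℝ) (hp : ∀ e, 0 ≤ p e ∧ p e ≤ 1)
    (f : Finset E → ℝ)
    (hf0 : ∀ B, 0 ≤ f B)
    (hfmono : ∀ B B' : Finset E, B ⊆ B' → f B ≤ f B')
    (hfsub : ∀ B B' : Finset E, B ⊆ B' → ∀ a ∉ B',
      f (insert a B') - f B' ≤ f (insert a B) - f B) :
    (∀ A : Finset E, 0 ≤ gval p f A) ∧
    (∀ A A' : Finset E, A ⊆ A' → gval p f A ≤ gval p f A') ∧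
    (∀ A A' : Finset E, A ⊆ A' → ∀ a ∉ A',
      gval p f (insert a A') - gval p f A' ≤
        gval p f (insert a A) - gval p f A) := by
  refine ⟨gval_nonneg hp hf0, fun _ _ hAA' => monotone_gval hp hfmono hAA', ?_⟩
  intro A A' hAA' a haA'
  have haA : a ∉ A := fun h => haA' (hAA' h)
  rw [gval_insert f haA', gval_insert f haA, add_sub_cancel_left, add_sub_cancel_left]
  exact mul_le_mul_of_nonneg_left
    (antitone_gval hp (antitone_marginal hfmono hfsub a) hAA') (hp a).1

/-- if `f` is nonnegative, monotone and submodular, so is its independent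
random-subset expectation `g`. -/
theorem gval_nonneg_monotone_submodular
    {E : Type*} [Fintype E] (p : E → ℝ) (hp : ∀ e, 0 ≤ p e ∧ p e ≤ 1)
    (f : Finset E → ℝ)
    (hf0 : ∀ B, 0 ≤ f B)
    (hfmono : ∀ B B' : Finset E, B ⊆ B' → f B ≤ f B')
    (hfsub : ∀ B B' : Finset E, B ⊆ B' → ∀ a ∉ B',
      f (insert a B') - f B' ≤ f (insert a B) - f B) :
    (∀ A : Finset E, 0 ≤ gval p f A) ∧
    (∀ A A' : Finset E, A ⊆ A' → gval p f A ≤ gval p f A') ∧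
    (∀ A A' : Finset E, A ⊆ A' → ∀ a ∉ A',
      gval p f (insert a A') - gval p f A' ≤
        gval p f (insert a A) - gval p f A) :=
  gval_nonneg_monotone_submodular_general p hp f hf0 hfmono hfsub
end
end

section
/- Fix an integer n ≥ 2 and ε ∈ (0,1). Consider the one-directional two-period instance with I = {i₁,…,i_n}, J = {j₁,…,j_n}, K_ℓ = 1 for every user, first-period like probabilities φ¹_{i,j₁} = 1 for every i∈I and φ¹_{i,j_k} = 1−ε for every i∈I and every k ≥ 2, and second-period like probabilities φ²_{j,i} = 1 for every j∈J, i∈I. Let x^G ∈ {0,1}^{E⃗} have x^G_{i,j₁} = 1 for every i∈I and all other entries 0 (this is the local-greedy solution, since each man i's stand-alone expected match probability φ¹_{i,j}·φ²_{j,i} is uniquely maximized at j = j₁), and let x^* have x^*_{i_k,j_k} = 1 for k = 1,…,n and all other entries 0. Then M²(x^G) = 1 while M²(x^*) = 1 + (n−1)(1−ε); hence the local greedy policy attains only a fraction 1/(1 + (n−1)(1−ε)) of the optimal expected number of matches, which is O(1/n) for fixed ε. -/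
/-!
With every capacity equal to one and only the women's second-period likes nonzero, woman `j`
contributes a second-period match exactly when at least one arc into her was liked in the first
period. First-period likes are independent, so
`M²(x) = ∑ⱼ (1 - ∏ᵢ (1 - xᵢⱼ φ¹ᵢⱼ))`.
Local greedy sends every man to `j₁`, so only `j₁` can receive likes and `M²(x^G) = 1`;
the diagonal assignment lets each `j_k` be liked independently with probability `φ¹_{k,k}`,
and these sum to `1 + (n - 1)(1 - ε)`.
-/

open scoped Classical
noncomputable section

/-- First-period like probabilities of the hard instance for local greedy:
`φ¹_{i,j₁} = 1`, `φ¹_{i,j_k} = 1 - ε` for `k ≥ 2`, and zero on arcs from `J`. -/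
def phi1g (n : ℕ) (ε : ℝ) : Arc (Fin n) (Fin n) → ℝ
  | Sum.inl (_, j) => if (j : ℕ) = 0 then 1 else 1 - ε
  | Sum.inr _ => 0

/-- Second-period like probabilities: `φ²_{j,i} = 1` for every `j ∈ J`, `i ∈ I`. -/
def phi2g (n : ℕ) : Arc (Fin n) (Fin n) → ℝ
  | Sum.inl _ => 0
  | Sum.inr _ => 1

open Finset

section IndependentSubsets

variable {α : Type*} [Fintype α] [DecidableEq α]

def bernoulliSetProb (w : α → ℝ) (B : Finset α) : ℝ :=
  (∏ a ∈ B, w a) * ∏ a ∈ Bᶜ, (1 - w a)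

theorem sum_bernoulliSetProb (w : α → ℝ) : ∑ B, bernoulliSetProb w B = 1 := by
  simpa [bernoulliSetProb] using (Fintype.prod_add w fun a => 1 - w a).symm

theorem sum_bernoulliSetProb_of_disjoint (w : α → ℝ) (A : Finset α) :
    ∑ B, (if Disjoint B A then 1 else 0) * bernoulliSetProb w B = ∏ a ∈ A, (1 - w a) := by
  have hindicator (B : Finset α) : (if Disjoint B A then (1 : ℝ) else 0) * ∏ a ∈ B, w a =
      ∏ a ∈ B, if a ∈ A then 0 else w a := by
    by_cases h : Disjoint B A
    · rw [if_pos h, one_mul]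
      exact prod_congr rfl fun a ha => (if_neg (disjoint_left.mp h ha)).symm
    · rw [if_neg h, zero_mul]
      obtain ⟨a, haB, haA⟩ := not_disjoint_iff.mp h
      exact (prod_eq_zero haB (by simp [haA])).symm
  -- The indicator is absorbed by setting the weights on `A` to zero, leaving a product expansion.
  calc ∑ B, (if Disjoint B A then 1 else 0) * bernoulliSetProb w B
      = ∑ B, (∏ a ∈ B, if a ∈ A then 0 else w a) * ∏ a ∈ Bᶜ, (1 - w a) := by
        simp only [bernoulliSetProb, ← mul_assoc, hindicator]
    _ = ∏ a, ((if a ∈ A then 0 else w a) + (1 - w a)) := (Fintype.prod_add _ _).symm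
    _ = ∏ a, if a ∈ A then 1 - w a else 1 := by
        congr! 1 with a; split_ifs <;> ring
    _ = ∏ a ∈ A, (1 - w a) := Fintype.prod_ite_mem A _

theorem sum_bernoulliSetProb_of_not_disjoint (w : α → ℝ) (A : Finset α) :
    ∑ B, (if Disjoint B A then 0 else 1) * bernoulliSetProb w B = 1 - ∏ a ∈ A, (1 - w a) := by
  calc ∑ B, (if Disjoint B A then 0 else 1) * bernoulliSetProb w B
      = ∑ B, bernoulliSetProb w B -
          ∑ B, (if Disjoint B A then 1 else 0) * bernoulliSetProb w B := by
        rw [← sum_sub_distrib]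
        congr! 1 with B
        split_ifs <;> ring
    _ = 1 - ∏ a ∈ A, (1 - w a) := by
        rw [sum_bernoulliSetProb, sum_bernoulliSetProb_of_disjoint]

end IndependentSubsets

theorem probOf_eq_bernoulliSetProb {I J : Type*} [Fintype I] [Fintype J] (φ1 : Arc I J → ℝ)
    (x B : Finset (Arc I J)) :
    probOf φ1 x B = bernoulliSetProb (fun a => if a ∈ x then φ1 a else 0) B :=
  rfl

theorem bestSum_zero {α : Type*} (s : Finset α) (K : ℕ) : bestSum s K (fun _ => 0) = 0 := by
  simp only [bestSum, sum_const_zero]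
  exact sup'_const _ _

theorem bestSum_one_one {α : Type*} (s : Finset α) :
    bestSum s 1 (fun _ => 1) = if s.Nonempty then 1 else 0 := by
  unfold bestSum
  split_ifs with hs
  · obtain ⟨a, ha⟩ := hs
    refine le_antisymm (sup'_le _ _ fun S hS => ?_) (le_sup'_of_le _ (b := {a}) ?_ ?_)
    · simp only [mem_filter, mem_powerset] at hS
      simpa using hS.2
    · simpa using ha
    · simp
  · simp [not_nonempty_iff_eq_empty.mp hs, filter_singleton]

def arcsInto {I J : Type*} [Fintype I] (j : J) : Finset (Arc I J) :=
  univ.image fun i => Sum.inl (i, j)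

theorem backlogJ_nonempty_iff {I J : Type*} [Fintype I] (B : Finset (Arc I J)) (j : J) :
    (backlogJ B j).Nonempty ↔ ¬Disjoint B (arcsInto j) := by
  simp [backlogJ, arcsInto, not_disjoint_iff, Finset.Nonempty]

section OneSidedUnitValues

variable {I J : Type*} [Fintype I] [Fintype J] {φ2 : Arc I J → ℝ}

theorem fval_eq_sum_not_disjoint (hI : ∀ i j, φ2 (Sum.inl (i, j)) = 0)
    (hJ : ∀ j i, φ2 (Sum.inr (j, i)) = 1) (B : Finset (Arc I J)) :
    fval φ2 (fun _ => 1) B = ∑ j, if Disjoint B (arcsInto j) then 0 else 1 := by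
  simp only [fval, hI, hJ, bestSum_zero, bestSum_one_one, backlogJ_nonempty_iff, sum_const_zero,
    zero_add, ite_not]

theorem M2_eq_sum_one_sub_prod (φ1 : Arc I J → ℝ) (hI : ∀ i j, φ2 (Sum.inl (i, j)) = 0)
    (hJ : ∀ j i, φ2 (Sum.inr (j, i)) = 1) (x : Finset (Arc I J)) :
    M2 φ1 φ2 (fun _ => 1) x =
      ∑ j, (1 - ∏ i, (1 - if Sum.inl (i, j) ∈ x then φ1 (Sum.inl (i, j)) else 0)) := by
  simp only [M2, fval_eq_sum_not_disjoint hI hJ, probOf_eq_bernoulliSetProb, sum_mul]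
  rw [sum_comm]
  congr! 1 with j
  rw [sum_bernoulliSetProb_of_not_disjoint, arcsInto, prod_image fun _ _ _ _ h => by simpa using h]

end OneSidedUnitValues

theorem M2_phi1g_column (n : ℕ) (ε : ℝ) (z : Fin n) (hz : (z : ℕ) = 0) :
    M2 (phi1g n ε) (phi2g n) (fun _ => 1)
      (univ.image fun i : Fin n => (Sum.inl (i, z) : Arc (Fin n) (Fin n))) = 1 := by
  rw [M2_eq_sum_one_sub_prod _ (fun _ _ => rfl) (fun _ _ => rfl), Fintype.sum_eq_single z]
  · rw [prod_eq_zero (mem_univ z) (by simp [phi1g, hz]), sub_zero]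
  · intro j hj
    simp [Ne.symm hj]

theorem M2_phi1g_diagonal (n : ℕ) (hn : n ≠ 0) (ε : ℝ) :
    M2 (phi1g n ε) (phi2g n) (fun _ => 1)
      (univ.image fun k : Fin n => (Sum.inl (k, k) : Arc (Fin n) (Fin n))) =
      1 + ((n : ℝ) - 1) * (1 - ε) := by
  rw [M2_eq_sum_one_sub_prod _ (fun _ _ => rfl) (fun _ _ => rfl)]
  calc _ = ∑ j : Fin n, phi1g n ε (Sum.inl (j, j)) := by
        refine sum_congr rfl fun j _ => ?_
        rw [Fintype.prod_eq_single j fun i hi => by simp [hi]]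
        simp
    _ = 1 + ((n : ℝ) - 1) * (1 - ε) := by
        obtain ⟨m, rfl⟩ := Nat.exists_eq_succ_of_ne_zero hn
        simp [Fin.sum_univ_succ, phi1g]
        ring

/-- local greedy obtains 1 expected match, while the optimal assignment
obtains `1 + (n-1)(1-ε)`; hence local greedy attains only a `1/(1+(n-1)(1-ε))`
fraction of the optimum. -/
theorem localGreedy_worst_case (n : ℕ) (hn : 2 ≤ n) (ε : ℝ) (hε0 : 0 < ε) :
    (∀ i k : Fin n, (k : ℕ) ≠ 0 →
        phi1g n ε (Sum.inl (i, k)) * phi2g n (Sum.inr (k, i)) <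
          phi1g n ε (Sum.inl (i, ⟨0, by omega⟩)) *
            phi2g n (Sum.inr (⟨0, by omega⟩, i))) ∧
    M2 (phi1g n ε) (phi2g n) (fun _ => 1)
        (Finset.univ.image fun i : Fin n =>
          (Sum.inl (i, ⟨0, by omega⟩) : Arc (Fin n) (Fin n))) = 1 ∧
    M2 (phi1g n ε) (phi2g n) (fun _ => 1)
        (Finset.univ.image fun k : Fin n => (Sum.inl (k, k) : Arc (Fin n) (Fin n))) =
      1 + ((n : ℝ) - 1) * (1 - ε) ∧
    M2 (phi1g n ε) (phi2g n) (fun _ => 1)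
        (Finset.univ.image fun i : Fin n =>
          (Sum.inl (i, ⟨0, by omega⟩) : Arc (Fin n) (Fin n))) /
      M2 (phi1g n ε) (phi2g n) (fun _ => 1)
        (Finset.univ.image fun k : Fin n => (Sum.inl (k, k) : Arc (Fin n) (Fin n))) =
      1 / (1 + ((n : ℝ) - 1) * (1 - ε)) := by
  have hgreedy := M2_phi1g_column n ε ⟨0, by omega⟩ rfl
  have hdiagonal := M2_phi1g_diagonal n (by omega) ε
  refine ⟨fun i k hk => ?_, hgreedy, hdiagonal, by rw [hgreedy, hdiagonal]⟩
  simpa [phi1g, phi2g, hk] using hε0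
end
end

section
/- Fix an integer n ≥ 1 and p, q ∈ (0,1]. Consider the instance with I = {i₁,…,i_{2n}}, J = {j₁, j₂}, K_ℓ = 1 for every user, and like probabilities φ¹_{i,j} = φ²_{i,j} = p and φ¹_{j,i} = φ²_{j,i} = q for every i∈I, j∈J. (a) Any perfect-matching policy—one that in each of the two periods displays a set of disjoint simultaneous pairs (both members of each displayed pair see each other in that period, each user sees at most one profile per period, and no pair of users sees each other twice), so that across the two periods at most four distinct pairs are displayed, each producing a match with probability p·q—obtains expected matches at most 4pq. (b) The vector x¹ ∈ {0,1}^{E⃗} with x¹_{i_k,j₁} = 1 for 1 ≤ k ≤ n, x¹_{i_k,j₂} = 1 for n < k ≤ 2n, x¹_{j₁,i_{2n}} = 1, x¹_{j₂,i₁} = 1, and all other entries 0, satisfies the two-directional sequential feasibility constraints (∑_{ℓ'} x¹_{ℓ,ℓ'} ≤ K_ℓ for every user ℓ and x¹_{ℓ,ℓ'} + x¹_{ℓ',ℓ} ≤ 1 for every pair), and M²(x¹) = 2pq + 2q(1 − (1−p)ⁿ). Consequently the ratio between the perfect-matching value and the optimum is at most 2p/(p + 1 − (1−p)ⁿ), which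 tends to 2/(n+1) as p → 0. -/
open scoped Classical
noncomputable section

/-- Like probabilities of the perfect-matching hard instance: `p` on arcs from `I`,
`q` on arcs from `J` (both periods). -/
def phiPM (n : ℕ) (p q : ℝ) : Arc (Fin (2 * n)) (Fin 2) → ℝ
  | Sum.inl _ => p
  | Sum.inr _ => q

/-- The alternative two-directional sequential solution `x¹`. -/
def pmSol (n : ℕ) (hn : 1 ≤ n) : Finset (Arc (Fin (2 * n)) (Fin 2)) :=
  (Finset.univ.image fun i : Fin (2 * n) =>
      (Sum.inl (i, if (i : ℕ) < n then 0 else 1) : Arc (Fin (2 * n)) (Fin 2))) ∪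
    {Sum.inr (0, ⟨2 * n - 1, by omega⟩), Sum.inr (1, ⟨0, by omega⟩)}


open Finset in
lemma sum_prob_total {α : Type*} [Fintype α] [DecidableEq α] (w : α → ℝ) :
    ∑ B : Finset α, (∏ a ∈ B, w a) * ∏ a ∈ Bᶜ, (1 - w a) = 1 := by
  have h := Finset.prod_add w (fun a => 1 - w a) (Finset.univ : Finset α)
  have h1 : ∏ a : α, (w a + (1 - w a)) = 1 := by
    rw [Finset.prod_congr rfl (fun a _ => by ring : ∀ a ∈ univ, w a + (1 - w a) = 1)]
    simp
  rw [h1, Finset.powerset_univ] at h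
  calc ∑ B : Finset α, (∏ a ∈ B, w a) * ∏ a ∈ Bᶜ, (1 - w a)
      = ∑ B : Finset α, (∏ a ∈ B, w a) * ∏ a ∈ univ \ B, (1 - w a) :=
        Finset.sum_congr rfl fun B _ => by rw [Finset.compl_eq_univ_sdiff]
    _ = 1 := h.symm

open Finset in
lemma sum_prob_avoid {α : Type*} [Fintype α] [DecidableEq α] (w : α → ℝ) (T : Finset α) :
    ∑ B : Finset α, (if (B ∩ T) = ∅ then (1:ℝ) else 0) * ((∏ a ∈ B, w a) * ∏ a ∈ Bᶜ, (1 - w a))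
      = ∏ a ∈ T, (1 - w a) := by
  have hrw : ∀ B : Finset α,
      (if (B ∩ T) = ∅ then (1:ℝ) else 0) * ((∏ a ∈ B, w a) * ∏ a ∈ Bᶜ, (1 - w a))
      = if (B ∩ T) = ∅ then (∏ a ∈ B, w a) * ∏ a ∈ Bᶜ, (1 - w a) else 0 := by
    intro B; by_cases h : B ∩ T = ∅ <;> simp [h]
  simp only [hrw]
  rw [← Finset.sum_filter]
  have hset : (Finset.univ.filter fun B : Finset α => B ∩ T = ∅) = Tᶜ.powerset := by
    ext B
    simp [Finset.eq_empty_iff_forall_notMem, Finset.subset_iff, Finset.mem_inter]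
  rw [hset]
  have hsplit : ∀ B ∈ Tᶜ.powerset,
      (∏ a ∈ B, w a) * ∏ a ∈ Bᶜ, (1 - w a)
      = (∏ a ∈ T, (1 - w a)) * ((∏ a ∈ B, w a) * ∏ a ∈ Tᶜ \ B, (1 - w a)) := by
    intro B hB
    rw [Finset.mem_powerset] at hB
    have hBc : Bᶜ = T ∪ (Tᶜ \ B) := by
      ext a
      simp only [Finset.mem_compl, Finset.mem_union, Finset.mem_sdiff]
      by_cases haT : a ∈ T
      · simp [haT]
        intro haB
        exact (Finset.mem_compl.mp (hB haB)) haT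
      · simp [haT]
    rw [hBc, Finset.prod_union (Finset.disjoint_left.mpr fun a ha hb =>
      absurd ha (Finset.mem_compl.mp (Finset.mem_sdiff.mp hb).1))]
    ring
  rw [Finset.sum_congr rfl hsplit, ← Finset.mul_sum]
  have h := Finset.prod_add w (fun a => 1 - w a) (Tᶜ)
  have h1 : ∏ a ∈ Tᶜ, (w a + (1 - w a)) = 1 := by
    rw [Finset.prod_congr rfl (fun a _ => by ring : ∀ a ∈ Tᶜ, w a + (1 - w a) = 1)]
    simp
  rw [h1] at h
  rw [← h, mul_one]

open Finset in
lemma sum_prob_hit {α : Type*} [Fintype α] [DecidableEq α] (w : α → ℝ) (T : Finset α) :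
    ∑ B : Finset α, (if (B ∩ T).Nonempty then (1:ℝ) else 0) * ((∏ a ∈ B, w a) * ∏ a ∈ Bᶜ, (1 - w a))
      = 1 - ∏ a ∈ T, (1 - w a) := by
  have key : ∀ B : Finset α, (if (B ∩ T).Nonempty then (1:ℝ) else 0)
      = 1 - (if (B ∩ T) = ∅ then 1 else 0) := by
    intro B
    by_cases h : B ∩ T = ∅
    · simp [h]
    · simp [h, Finset.nonempty_iff_ne_empty.mpr h]
  simp only [key, sub_mul, one_mul]
  rw [Finset.sum_sub_distrib, sum_prob_total, sum_prob_avoid]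

lemma bestSum_const_one {β : Type*} (s : Finset β) (c : ℝ) (hc : 0 ≤ c) :
    bestSum s 1 (fun _ => c) = if s.Nonempty then c else 0 := by
  unfold bestSum
  split_ifs with hs
  · obtain ⟨a, ha⟩ := hs
    apply le_antisymm
    · apply Finset.sup'_le
      intro S hS
      simp only [Finset.mem_filter, Finset.mem_powerset] at hS
      rw [Finset.sum_const, nsmul_eq_mul]
      rcases Nat.le_one_iff_eq_zero_or_eq_one.mp hS.2 with h | h <;> simp [h, hc]
    · refine Finset.le_sup'_of_le _ (b := {a}) ?_ ?_
      · simp [ha]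
      · simp
  · rw [Finset.not_nonempty_iff_eq_empty] at hs
    subst hs
    apply le_antisymm
    · apply Finset.sup'_le
      intro S hS
      simp only [Finset.mem_filter, Finset.mem_powerset, Finset.subset_empty] at hS
      obtain ⟨rfl, -⟩ := hS
      simp
    · exact Finset.le_sup'_of_le _ (b := ∅) (by simp) (by simp)

lemma mem_pmSol_inl (n : ℕ) (hn : 1 ≤ n) (i : Fin (2 * n)) (j : Fin 2) :
    (Sum.inl (i, j) : Arc (Fin (2 * n)) (Fin 2)) ∈ pmSol n hn ↔
      j = if (i : ℕ) < n then 0 else 1 := by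
  simp only [pmSol, Finset.mem_union, Finset.mem_image, Finset.mem_univ, true_and,
    Finset.mem_insert, Finset.mem_singleton]
  constructor
  · rintro (⟨i', h⟩ | h | h)
    · obtain ⟨rfl, rfl⟩ : i' = i ∧ (if (i' : ℕ) < n then (0 : Fin 2) else 1) = j := by
        cases h; exact ⟨rfl, rfl⟩
      rfl
    · cases h
    · cases h
  · rintro rfl
    exact Or.inl ⟨i, rfl⟩

lemma mem_pmSol_inr (n : ℕ) (hn : 1 ≤ n) (j : Fin 2) (i : Fin (2 * n)) :
    (Sum.inr (j, i) : Arc (Fin (2 * n)) (Fin 2)) ∈ pmSol n hn ↔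
      (j = 0 ∧ (i : ℕ) = 2 * n - 1) ∨ (j = 1 ∧ (i : ℕ) = 0) := by
  simp only [pmSol, Finset.mem_union, Finset.mem_image, Finset.mem_univ, true_and,
    Finset.mem_insert, Finset.mem_singleton]
  constructor
  · rintro (⟨i', h⟩ | h | h)
    · cases h
    · cases h; left; exact ⟨rfl, rfl⟩
    · cases h; right; exact ⟨rfl, rfl⟩
  · rintro (⟨rfl, h⟩ | ⟨rfl, h⟩)
    · right; left
      exact congrArg Sum.inr (Prod.ext rfl (Fin.ext h))
    · right; right
      exact congrArg Sum.inr (Prod.ext rfl (Fin.ext h))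

/-- The weight function induced by the solution `pmSol`. -/
def wPM (n : ℕ) (hn : 1 ≤ n) (p q : ℝ) : Arc (Fin (2 * n)) (Fin 2) → ℝ :=
  fun a => if a ∈ pmSol n hn then phiPM n p q a else 0

lemma wPM_inr (n : ℕ) (hn : 1 ≤ n) (p q : ℝ) (j : Fin 2) (i : Fin (2 * n)) :
    wPM n hn p q (Sum.inr (j, i)) =
      if (j = 0 ∧ (i : ℕ) = 2 * n - 1) ∨ (j = 1 ∧ (i : ℕ) = 0) then q else 0 := by
  unfold wPM
  rw [show phiPM n p q (Sum.inr (j, i)) = q from rfl]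
  by_cases h : (j = 0 ∧ (i : ℕ) = 2 * n - 1) ∨ (j = 1 ∧ (i : ℕ) = 0)
  · rw [if_pos ((mem_pmSol_inr n hn j i).mpr h), if_pos h]
  · rw [if_neg (fun hm => h ((mem_pmSol_inr n hn j i).mp hm)), if_neg h]

lemma wPM_inl (n : ℕ) (hn : 1 ≤ n) (p q : ℝ) (i : Fin (2 * n)) (j : Fin 2) :
    wPM n hn p q (Sum.inl (i, j)) =
      if j = (if (i : ℕ) < n then 0 else 1) then p else 0 := by
  unfold wPM
  rw [show phiPM n p q (Sum.inl (i, j)) = p from rfl]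
  by_cases h : j = (if (i : ℕ) < n then 0 else 1)
  · rw [if_pos ((mem_pmSol_inl n hn i j).mpr h), if_pos h]
  · rw [if_neg (fun hm => h ((mem_pmSol_inl n hn i j).mp hm)), if_neg h]

lemma card_lt_filter (m n : ℕ) (h : n ≤ m) :
    (Finset.univ.filter fun i : Fin m => (i : ℕ) < n).card = n := by
  have hset : (Finset.univ.filter fun i : Fin m => (i : ℕ) < n)
      = (Finset.univ : Finset (Fin n)).map ⟨Fin.castLE h, Fin.castLE_injective h⟩ := by
    ext a
    simp only [Finset.mem_filter, Finset.mem_univ, true_and, Finset.mem_map,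
      Function.Embedding.coeFn_mk]
    constructor
    · intro ha; exact ⟨⟨a, ha⟩, Fin.ext rfl⟩
    · rintro ⟨b, rfl⟩; exact b.isLt
  rw [hset, Finset.card_map, Finset.card_univ, Fintype.card_fin]

lemma probOf_eq_w (n : ℕ) (hn : 1 ≤ n) (p q : ℝ) (B : Finset (Arc (Fin (2 * n)) (Fin 2))) :
    probOf (phiPM n p q) (pmSol n hn) B
      = (∏ a ∈ B, wPM n hn p q a) * ∏ a ∈ Bᶜ, (1 - wPM n hn p q a) := by
  unfold probOf wPM
  congr!

lemma M2_eval (n : ℕ) (hn : 1 ≤ n) (p q : ℝ)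
    (hp0 : 0 ≤ p) (hq0 : 0 ≤ q) :
    M2 (phiPM n p q) (phiPM n p q) (fun _ => 1) (pmSol n hn) =
      2 * p * q + 2 * q * (1 - (1 - p) ^ n) := by
  set TI : Fin (2 * n) → Finset (Arc (Fin (2 * n)) (Fin 2)) :=
    fun i => Finset.univ.image fun j : Fin 2 => (Sum.inr (j, i) : Arc (Fin (2 * n)) (Fin 2)) with hTI
  set TJ : Fin 2 → Finset (Arc (Fin (2 * n)) (Fin 2)) :=
    fun j => Finset.univ.image fun i : Fin (2 * n) => (Sum.inl (i, j) : Arc (Fin (2 * n)) (Fin 2)) with hTJ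
  have hiffI : ∀ (B : Finset (Arc (Fin (2 * n)) (Fin 2))) i,
      (backlogI B i).Nonempty ↔ (B ∩ TI i).Nonempty := by
    intro B i
    constructor
    · rintro ⟨j, hj⟩
      simp only [backlogI, Finset.mem_filter, Finset.mem_univ, true_and] at hj
      exact ⟨Sum.inr (j, i), Finset.mem_inter.mpr ⟨hj,
        Finset.mem_image.mpr ⟨j, Finset.mem_univ j, rfl⟩⟩⟩
    · rintro ⟨a, ha⟩
      rw [Finset.mem_inter] at ha
      obtain ⟨j, -, rfl⟩ := Finset.mem_image.mp ha.2
      refine ⟨j, ?_⟩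
      simp only [backlogI, Finset.mem_filter, Finset.mem_univ, true_and]
      exact ha.1
  have hiffJ : ∀ (B : Finset (Arc (Fin (2 * n)) (Fin 2))) j,
      (backlogJ B j).Nonempty ↔ (B ∩ TJ j).Nonempty := by
    intro B j
    constructor
    · rintro ⟨i, hi⟩
      simp only [backlogJ, Finset.mem_filter, Finset.mem_univ, true_and] at hi
      exact ⟨Sum.inl (i, j), Finset.mem_inter.mpr ⟨hi,
        Finset.mem_image.mpr ⟨i, Finset.mem_univ i, rfl⟩⟩⟩
    · rintro ⟨a, ha⟩
      rw [Finset.mem_inter] at ha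
      obtain ⟨i, -, rfl⟩ := Finset.mem_image.mp ha.2
      refine ⟨i, ?_⟩
      simp only [backlogJ, Finset.mem_filter, Finset.mem_univ, true_and]
      exact ha.1
  have hfval : ∀ B, fval (phiPM n p q) (fun _ => 1) B =
      (∑ i : Fin (2 * n), if (B ∩ TI i).Nonempty then p else 0) +
      ∑ j : Fin 2, if (B ∩ TJ j).Nonempty then q else 0 := by
    intro B
    unfold fval
    congr 1
    · refine Finset.sum_congr rfl fun i _ => ?_
      rw [show (fun j => phiPM n p q (Sum.inl (i, j))) = (fun _ => p) from rfl,
        bestSum_const_one _ _ hp0]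
      exact if_congr (hiffI B i) rfl rfl
    · refine Finset.sum_congr rfl fun j _ => ?_
      rw [show (fun i => phiPM n p q (Sum.inr (j, i))) = (fun _ => q) from rfl,
        bestSum_const_one _ _ hq0]
      exact if_congr (hiffJ B j) rfl rfl
  have key : ∀ (c : ℝ) (T : Finset (Arc (Fin (2 * n)) (Fin 2))),
      ∑ B : Finset (Arc (Fin (2 * n)) (Fin 2)),
        (if (B ∩ T).Nonempty then c else 0) *
          ((∏ a ∈ B, wPM n hn p q a) * ∏ a ∈ Bᶜ, (1 - wPM n hn p q a))
      = c * (1 - ∏ a ∈ T, (1 - wPM n hn p q a)) := by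
    intro c T
    rw [← sum_prob_hit (wPM n hn p q) T, Finset.mul_sum]
    refine Finset.sum_congr rfl fun B _ => ?_
    by_cases h : (B ∩ T).Nonempty <;> simp [h]
  have hTIprod : ∀ i, ∏ a ∈ TI i, (1 - wPM n hn p q a)
      = ∏ j : Fin 2, (1 - wPM n hn p q (Sum.inr (j, i))) := by
    intro i
    rw [hTI]
    exact Finset.prod_image fun x _ y _ h => by cases h; rfl
  have hTJprod : ∀ j, ∏ a ∈ TJ j, (1 - wPM n hn p q a)
      = ∏ i : Fin (2 * n), (1 - wPM n hn p q (Sum.inl (i, j))) := by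
    intro j
    rw [hTJ]
    exact Finset.prod_image fun x _ y _ h => by cases h; rfl
  calc M2 (phiPM n p q) (phiPM n p q) (fun _ => 1) (pmSol n hn)
      = ∑ B : Finset (Arc (Fin (2 * n)) (Fin 2)),
          (((∑ i : Fin (2 * n), if (B ∩ TI i).Nonempty then p else 0) +
            ∑ j : Fin 2, if (B ∩ TJ j).Nonempty then q else 0) *
          ((∏ a ∈ B, wPM n hn p q a) * ∏ a ∈ Bᶜ, (1 - wPM n hn p q a))) := by
        unfold M2
        exact Finset.sum_congr rfl fun B _ => by rw [hfval, probOf_eq_w]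
    _ = (∑ i : Fin (2 * n), ∑ B : Finset (Arc (Fin (2 * n)) (Fin 2)),
          (if (B ∩ TI i).Nonempty then p else 0) *
            ((∏ a ∈ B, wPM n hn p q a) * ∏ a ∈ Bᶜ, (1 - wPM n hn p q a))) +
        ∑ j : Fin 2, ∑ B : Finset (Arc (Fin (2 * n)) (Fin 2)),
          (if (B ∩ TJ j).Nonempty then q else 0) *
            ((∏ a ∈ B, wPM n hn p q a) * ∏ a ∈ Bᶜ, (1 - wPM n hn p q a)) := by
        simp only [add_mul, Finset.sum_add_distrib, Finset.sum_mul]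
        rw [Finset.sum_comm, Finset.sum_comm (γ := Fin 2)]
    _ = (∑ i : Fin (2 * n), p * (1 - ∏ j : Fin 2, (1 - wPM n hn p q (Sum.inr (j, i))))) +
        ∑ j : Fin 2, q * (1 - ∏ i : Fin (2 * n), (1 - wPM n hn p q (Sum.inl (i, j)))) := by
        congr 1
        · exact Finset.sum_congr rfl fun i _ => by rw [key, hTIprod]
        · exact Finset.sum_congr rfl fun j _ => by rw [key, hTJprod]
    _ = 2 * p * q + 2 * q * (1 - (1 - p) ^ n) := by
        have hgi : ∀ i : Fin (2 * n),
            p * (1 - ∏ j : Fin 2, (1 - wPM n hn p q (Sum.inr (j, i))))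
            = (if i = (⟨2 * n - 1, by omega⟩ : Fin (2 * n)) then p * q else 0) +
              (if i = (⟨0, by omega⟩ : Fin (2 * n)) then p * q else 0) := by
          intro i
          rw [Fin.prod_univ_two, wPM_inr, wPM_inr]
          by_cases h0 : (i : ℕ) = 2 * n - 1 <;> by_cases h1 : (i : ℕ) = 0
          · exact absurd h1 (by omega)
          · rw [if_pos (Or.inl ⟨rfl, h0⟩),
              if_neg (by
                rintro (⟨h, -⟩ | ⟨-, h⟩)
                · exact absurd h (by decide)
                · exact h1 h),
              if_pos (Fin.ext h0), if_neg (fun h => h1 (congrArg Fin.val h))]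
            ring
          · rw [if_neg (by
                rintro (⟨-, h⟩ | ⟨h, -⟩)
                · exact h0 h
                · exact absurd h (by decide)),
              if_pos (Or.inr ⟨rfl, h1⟩),
              if_neg (fun h => h0 (congrArg Fin.val h)), if_pos (Fin.ext h1)]
            ring
          · rw [if_neg (by
                rintro (⟨-, h⟩ | ⟨h, -⟩)
                · exact h0 h
                · exact absurd h (by decide)),
              if_neg (by
                rintro (⟨h, -⟩ | ⟨-, h⟩)
                · exact absurd h (by decide)
                · exact h1 h),
              if_neg (fun h => h0 (congrArg Fin.val h)), if_neg (fun h => h1 (congrArg Fin.val h))]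
            ring
        have hsum1 : (∑ i : Fin (2 * n),
              p * (1 - ∏ j : Fin 2, (1 - wPM n hn p q (Sum.inr (j, i))))) = 2 * p * q := by
          rw [Finset.sum_congr rfl fun i _ => hgi i, Finset.sum_add_distrib,
            Finset.sum_ite_eq' Finset.univ, Finset.sum_ite_eq' Finset.univ]
          simp only [Finset.mem_univ, if_pos]
          ring
        have hterm : ∀ (j : Fin 2) (i : Fin (2 * n)), 1 - wPM n hn p q (Sum.inl (i, j))
            = if j = (if (i : ℕ) < n then 0 else 1) then (1 - p) else 1 := by
          intro j i
          rw [wPM_inl]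
          split_ifs <;> ring
        have hcomp := Finset.card_filter_add_card_filter_not
          (s := (Finset.univ : Finset (Fin (2 * n)))) (p := fun i => (i : ℕ) < n)
        rw [card_lt_filter (2 * n) n (by omega), Finset.card_univ, Fintype.card_fin] at hcomp
        have hprodgen : ∀ j : Fin 2,
            (Finset.univ.filter fun i : Fin (2 * n) => j = (if (i : ℕ) < n then 0 else 1)).card = n →
            ∏ i : Fin (2 * n), (1 - wPM n hn p q (Sum.inl (i, j))) = (1 - p) ^ n := by
          intro j hcard
          rw [Finset.prod_congr rfl fun i _ => hterm j i, Finset.prod_ite, Finset.prod_const,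
            Finset.prod_const, one_pow, mul_one, hcard]
        have hprod0 : ∏ i : Fin (2 * n), (1 - wPM n hn p q (Sum.inl (i, 0))) = (1 - p) ^ n := by
          apply hprodgen
          have hfe : (Finset.univ.filter fun i : Fin (2 * n) =>
              (0 : Fin 2) = (if (i : ℕ) < n then 0 else 1))
              = Finset.univ.filter fun i : Fin (2 * n) => (i : ℕ) < n := by
            apply Finset.filter_congr
            intro i _
            by_cases h : (i : ℕ) < n <;> simp [h, Fin.ext_iff]
          rw [hfe, card_lt_filter (2 * n) n (by omega)]
        have hprod1 : ∏ i : Fin (2 * n), (1 - wPM n hn p q (Sum.inl (i, 1))) = (1 - p) ^ n := by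
          apply hprodgen
          have hfe : (Finset.univ.filter fun i : Fin (2 * n) =>
              (1 : Fin 2) = (if (i : ℕ) < n then 0 else 1))
              = Finset.univ.filter fun i : Fin (2 * n) => ¬ (i : ℕ) < n := by
            apply Finset.filter_congr
            intro i _
            by_cases h : (i : ℕ) < n <;> simp [h, Fin.ext_iff]
          rw [hfe]
          omega
        rw [hsum1, Fin.sum_univ_two, hprod0, hprod1]
        ring

/-- the perfect-matching policy obtains at most `4pq` expected matches,
while the sequential solution `x¹` is feasible and obtains
`2pq + 2q(1-(1-p)ⁿ)`; the resulting ratio is `2p/(p+1-(1-p)ⁿ) → 2/(n+1)` as `p → 0`. -/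
theorem perfectMatching_worst_case (n : ℕ) (hn : 1 ≤ n) (p q : ℝ)
    (hp0 : 0 < p) (hp1 : p ≤ 1) (hq0 : 0 < q) (hq1 : q ≤ 1) :
    (∀ W1 W2 : Finset (Fin (2 * n) × Fin 2),
      (∀ i, (W1.filter fun e => e.1 = i).card ≤ 1) →
      (∀ j, (W1.filter fun e => e.2 = j).card ≤ 1) →
      (∀ i, (W2.filter fun e => e.1 = i).card ≤ 1) →
      (∀ j, (W2.filter fun e => e.2 = j).card ≤ 1) →
      Disjoint W1 W2 →
      (∑ _e ∈ W1, p * q) + (∑ _e ∈ W2, p * q) ≤ 4 * (p * q)) ∧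
    (∀ l : Fin (2 * n) ⊕ Fin 2, outdegX (pmSol n hn) l ≤ 1) ∧
    (∀ (i : Fin (2 * n)) (j : Fin 2),
      ¬((Sum.inl (i, j) : Arc (Fin (2 * n)) (Fin 2)) ∈ pmSol n hn ∧
        (Sum.inr (j, i) : Arc (Fin (2 * n)) (Fin 2)) ∈ pmSol n hn)) ∧
    M2 (phiPM n p q) (phiPM n p q) (fun _ => 1) (pmSol n hn) =
      2 * p * q + 2 * q * (1 - (1 - p) ^ n) ∧
    4 * p * q / (2 * p * q + 2 * q * (1 - (1 - p) ^ n)) =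
      2 * p / (p + 1 - (1 - p) ^ n) ∧
    Filter.Tendsto (fun r : ℝ => 2 * r / (r + 1 - (1 - r) ^ n))
      (nhdsWithin 0 (Set.Ioi 0)) (nhds (2 / ((n : ℝ) + 1))) := by
  refine ⟨?_, ?_, ?_, ?_, ?_, ?_⟩
  · -- Part (a): perfect-matching policy value is at most 4pq
    intro W1 W2 _ h1j _ h2j _
    have keycard : ∀ (W : Finset (Fin (2 * n) × Fin 2)),
        (∀ j, (W.filter fun e => e.2 = j).card ≤ 1) → W.card ≤ 2 := by
      intro W hW
      have hfib := Finset.card_eq_sum_card_fiberwise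
        (f := fun e : Fin (2 * n) × Fin 2 => e.2) (s := W) (t := Finset.univ)
        (fun x _ => Finset.mem_univ _)
      rw [hfib]
      calc ∑ j : Fin 2, (W.filter fun e => e.2 = j).card ≤ ∑ _j : Fin 2, 1 :=
            Finset.sum_le_sum fun j _ => hW j
        _ = 2 := by simp
    have hpq : 0 ≤ p * q := le_of_lt (mul_pos hp0 hq0)
    rw [Finset.sum_const, Finset.sum_const, nsmul_eq_mul, nsmul_eq_mul]
    have b1 : (W1.card : ℝ) ≤ 2 := by exact_mod_cast keycard W1 h1j
    have b2 : (W2.card : ℝ) ≤ 2 := by exact_mod_cast keycard W2 h2j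
    nlinarith
  · -- Feasibility: out-degree at most 1
    intro l
    rw [outdegX, Finset.card_le_one]
    intro a ha b hb
    simp only [Finset.mem_filter] at ha hb
    obtain ⟨ha1, ha2⟩ := ha
    obtain ⟨hb1, hb2⟩ := hb
    rcases a with ⟨ia, ja⟩ | ⟨ja, ia⟩ <;> rcases b with ⟨ib, jb⟩ | ⟨jb, ib⟩ <;>
      rcases l with li | lj <;>
      simp only [arcSrc, Sum.inl.injEq, Sum.inr.injEq, reduceCtorEq] at ha2 hb2
    · subst ha2; subst hb2
      rw [mem_pmSol_inl] at ha1 hb1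
      subst ha1; subst hb1; rfl
    · subst ha2; subst hb2
      rw [mem_pmSol_inr] at ha1 hb1
      rcases ha1 with ⟨rfl, h2⟩ | ⟨rfl, h2⟩ <;>
        rcases hb1 with ⟨h3, h4⟩ | ⟨h3, h4⟩
      · exact congrArg Sum.inr (Prod.ext rfl (Fin.ext (h2.trans h4.symm)))
      · exact absurd h3 (by decide)
      · exact absurd h3 (by decide)
      · exact congrArg Sum.inr (Prod.ext rfl (Fin.ext (h2.trans h4.symm)))
  · -- Feasibility: no pair displayed in both directions
    rintro i j ⟨h1, h2⟩
    rw [mem_pmSol_inl] at h1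
    rw [mem_pmSol_inr] at h2
    rcases h2 with ⟨rfl, h⟩ | ⟨rfl, h⟩
    · rw [if_neg (by omega)] at h1
      exact absurd h1 (by decide)
    · rw [if_pos (by omega)] at h1
      exact absurd h1 (by decide)
  · -- Value of the sequential solution
    exact M2_eval n hn p q hp0.le hq0.le
  · -- Ratio algebra
    have hle : (1 - p) ^ n ≤ 1 := pow_le_one₀ (by linarith) (by linarith)
    rw [show 2 * p * q + 2 * q * (1 - (1 - p) ^ n) = (2 * q) * (p + 1 - (1 - p) ^ n) by ring]
    rw [show 4 * p * q = (2 * q) * (2 * p) by ring]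
    rw [mul_div_mul_left _ _ (by linarith : (2:ℝ) * q ≠ 0)]
  · -- The limit as p → 0
    have hgeom : ∀ r : ℝ, r + 1 - (1 - r) ^ n
        = r * (1 + ∑ k ∈ Finset.range n, (1 - r) ^ k) := by
      intro r
      have h := geom_sum_mul (1 - r) n
      nlinarith [h]
    have heq : ∀ r ∈ Set.Ioi (0:ℝ), 2 * r / (r + 1 - (1 - r) ^ n)
        = 2 / (1 + ∑ k ∈ Finset.range n, (1 - r) ^ k) := by
      intro r hr
      rw [Set.mem_Ioi] at hr
      rw [hgeom r, show 2 * r = r * 2 by ring, mul_div_mul_left _ _ (ne_of_gt hr)]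
    have hmain : Filter.Tendsto (fun r : ℝ => 2 / (1 + ∑ k ∈ Finset.range n, (1 - r) ^ k))
        (nhdsWithin 0 (Set.Ioi 0)) (nhds (2 / ((n : ℝ) + 1))) := by
      have hcont : Filter.Tendsto (fun r : ℝ => 1 + ∑ k ∈ Finset.range n, (1 - r) ^ k)
          (nhdsWithin 0 (Set.Ioi 0)) (nhds ((n : ℝ) + 1)) := by
        have hc : Continuous (fun r : ℝ => 1 + ∑ k ∈ Finset.range n, (1 - r) ^ k) := by
          continuity
        have h0 : (fun r : ℝ => 1 + ∑ k ∈ Finset.range n, (1 - r) ^ k) 0 = (n : ℝ) + 1 := by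
          simp [add_comm]
        exact h0 ▸ (hc.tendsto 0).mono_left nhdsWithin_le_nhds
      exact Filter.Tendsto.div tendsto_const_nhds hcont (by positivity)
    refine Filter.Tendsto.congr' ?_ hmain
    filter_upwards [self_mem_nhdsWithin] with r hr
    exact (heq r hr).symm
end
end

section
/- Let I and J be finite disjoint sets, K_ℓ a nonnegative integer for every ℓ ∈ I∪J, and let the ground set be 𝓖 = E_I ∪ E, where E_I = {(i,j) : i∈I, j∈J} and E is the set of unordered pairs {i,j}. Define I₁ = { A ⊆ 𝓖 : |A ∩ {(i,j), {i,j}}| ≤ 1 for every i∈I, j∈J, and |A ∩ Y_i| ≤ K_i for every i∈I, where Y_i = {(i,j) : j∈J} ∪ {{i,j} : j∈J} } and I₂ = { A ⊆ 𝓖 : |A ∩ {{i,j} : i∈I}| ≤ K_j for every j∈J }. Then I₁ is the family of independent sets of a matroid on 𝓖 (a laminar matroid), I₂ is the family of independent sets of a matroid on 𝓖 (a partition matroid), and the one-directional feasible region with non-sequential first-period matches equals I₁ ∩ I₂. -/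
open scoped Classical
noncomputable section

/-- A family of finite sets is the family of independent sets of a matroid:
it contains the empty set, is downward closed, and satisfies the exchange property. -/
def IsMatroidFamily {α : Type*} (F : Finset α → Prop) : Prop :=
  F ∅ ∧ (∀ A B : Finset α, A ⊆ B → F B → F A) ∧
    ∀ A B : Finset α, F A → F B → A.card < B.card →
      ∃ a ∈ B, a ∉ A ∧ F (insert a A)

open Finset

lemma fiber_exchange {α β : Type*} [Fintype β] (φ : α → β)
    (A B : Finset α) (h : A.card < B.card) :
    ∃ b ∈ B, b ∉ A ∧
      (A.filter fun g => φ g = φ b).card < (B.filter fun g => φ g = φ b).card := by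
  classical
  have hA : A.card = ∑ x : β, (A.filter fun g => φ g = x).card :=
    card_eq_sum_card_fiberwise (fun x _ => mem_univ _)
  have hB : B.card = ∑ x : β, (B.filter fun g => φ g = x).card :=
    card_eq_sum_card_fiberwise (fun x _ => mem_univ _)
  have hex : ∃ x : β, (A.filter fun g => φ g = x).card < (B.filter fun g => φ g = x).card := by
    by_contra hc
    push_neg at hc
    have hle := Finset.sum_le_sum (fun x (_ : x ∈ (univ : Finset β)) => hc x)
    omega
  obtain ⟨x, hx⟩ := hex
  have hne : ∃ b ∈ B.filter (fun g => φ g = x), b ∉ A := by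
    by_contra hc
    push_neg at hc
    have hsub : B.filter (fun g => φ g = x) ⊆ A.filter (fun g => φ g = x) := by
      intro b hb
      have hb' := (mem_filter.mp hb)
      exact mem_filter.mpr ⟨hc b hb, hb'.2⟩
    exact absurd (card_le_card hsub) (by omega)
  obtain ⟨b, hb, hbA⟩ := hne
  have hb' := mem_filter.mp hb
  refine ⟨b, hb'.1, hbA, ?_⟩
  rw [hb'.2]; exact hx

section
variable {I J : Type*}

lemma inter_pair_eq (A : Finset ((I × J) ⊕ (I × J))) (i : I) (j : J) :
    A ∩ ({Sum.inl (i, j), Sum.inr (i, j)} : Finset ((I × J) ⊕ (I × J)))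
      = A.filter (fun g => Sum.elim id id g = (i, j)) := by
  ext g
  cases g with
  | inl e => simp [and_comm, eq_comm]
  | inr e => simp [and_comm, eq_comm]

lemma filter_class_eq (A : Finset ((I × J) ⊕ (I × J))) (i : I) :
    A.filter (fun g => Sum.elim (fun e => e.1 = i) (fun e => e.1 = i) g)
      = A.filter (fun g => (Sum.elim id id g).1 = i) := by
  apply filter_congr
  intro g _
  cases g <;> simp

lemma filter_j_eq (A : Finset ((I × J) ⊕ (I × J))) (j : J) :
    A.filter (fun g => Sum.elim (fun _ => False) (fun e => e.2 = j) g)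
      = A.filter (fun g =>
          (Sum.elim (fun _ => (none : Option J)) (fun e => some e.2) g) = some j) := by
  apply filter_congr
  intro g _
  cases g <;> simp

lemma pair_card_iff {α : Type*} [DecidableEq α] (A : Finset α) {x y : α} (hxy : x ≠ y) :
    (A ∩ {x, y}).card ≤ 1 ↔ ¬(x ∈ A ∧ y ∈ A) := by
  constructor
  · rintro h ⟨hx, hy⟩
    have hsub : ({x, y} : Finset α) ⊆ A ∩ {x, y} := by
      intro a ha
      simp only [mem_insert, mem_singleton] at ha
      rcases ha with rfl | rfl <;> simp [hx, hy]
    have := card_le_card hsub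
    rw [card_pair hxy] at this
    omega
  · intro h
    rw [card_le_one]
    intro a ha b hb
    simp only [mem_inter, mem_insert, mem_singleton] at ha hb
    rcases ha.2 with rfl | rfl <;> rcases hb.2 with rfl | rfl
    · rfl
    · exact absurd ⟨ha.1, hb.1⟩ h
    · exact absurd ⟨hb.1, ha.1⟩ h
    · rfl

lemma filter_split_card (A : Finset ((I × J) ⊕ (I × J))) (i : I) :
    (A.filter fun g => Sum.elim (fun e => e.1 = i) (fun _ => False) g).card +
      (A.filter fun g => Sum.elim (fun _ => False) (fun e => e.1 = i) g).card =
    (A.filter fun g => Sum.elim (fun e => e.1 = i) (fun e => e.1 = i) g).card := by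
  classical
  rw [← card_union_of_disjoint]
  · congr 1
    rw [← filter_or]
    apply filter_congr
    intro g _
    cases g <;> simp
  · rw [Finset.disjoint_left]
    intro g h1 h2
    rw [mem_filter] at h1 h2
    cases g with
    | inl e => exact h2.2
    | inr e => exact h1.2
end


/-- the one-directional feasible region with non-sequential first-period
matches is the intersection of a laminar matroid and a partition matroid.
The ground set is `(I × J) ⊕ (I × J)`: `Sum.inl (i,j)` encodes the arc `(i,j)` and
`Sum.inr (i,j)` encodes the unordered pair `{i,j}`. -/
theorem oneDirectional_nonSequential_matroid_intersection
    {I J : Type*} [Fintype I] [Fintype J] (K : I ⊕ J → ℕ) :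
    IsMatroidFamily (fun A : Finset ((I × J) ⊕ (I × J)) =>
      (∀ (i : I) (j : J),
        (A ∩ ({Sum.inl (i, j), Sum.inr (i, j)} : Finset ((I × J) ⊕ (I × J)))).card ≤ 1) ∧
      ∀ i : I,
        (A.filter fun g => Sum.elim (fun e => e.1 = i) (fun e => e.1 = i) g).card ≤
          K (Sum.inl i)) ∧
    IsMatroidFamily (fun A : Finset ((I × J) ⊕ (I × J)) =>
      ∀ j : J,
        (A.filter fun g => Sum.elim (fun _ => False) (fun e => e.2 = j) g).card ≤
          K (Sum.inr j)) ∧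
    ∀ A : Finset ((I × J) ⊕ (I × J)),
      ((∀ (i : I) (j : J),
          ¬((Sum.inl (i, j) : (I × J) ⊕ (I × J)) ∈ A ∧
            (Sum.inr (i, j) : (I × J) ⊕ (I × J)) ∈ A)) ∧
        (∀ i : I,
          (A.filter fun g => Sum.elim (fun e => e.1 = i) (fun _ => False) g).card +
            (A.filter fun g => Sum.elim (fun _ => False) (fun e => e.1 = i) g).card ≤
            K (Sum.inl i)) ∧
        ∀ j : J,
          (A.filter fun g => Sum.elim (fun _ => False) (fun e => e.2 = j) g).card ≤
            K (Sum.inr j)) ↔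
      (((∀ (i : I) (j : J),
          (A ∩ ({Sum.inl (i, j), Sum.inr (i, j)} :
            Finset ((I × J) ⊕ (I × J)))).card ≤ 1) ∧
        ∀ i : I,
          (A.filter fun g => Sum.elim (fun e => e.1 = i) (fun e => e.1 = i) g).card ≤
            K (Sum.inl i)) ∧
        ∀ j : J,
          (A.filter fun g => Sum.elim (fun _ => False) (fun e => e.2 = j) g).card ≤
            K (Sum.inr j)) := by
  refine ⟨⟨⟨fun i j => by simp, fun i => by simp⟩, ?_, ?_⟩,
    ⟨fun j => by simp, ?_, ?_⟩, ?_⟩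
  · -- downward closed, matroid 1
    rintro A B hAB ⟨h1, h2⟩
    refine ⟨fun i j => le_trans (card_le_card (inter_subset_inter_right hAB)) (h1 i j),
      fun i => le_trans (card_le_card (filter_subset_filter _ hAB)) (h2 i)⟩
  · -- exchange, matroid 1
    rintro A B hA hB hcard
    obtain ⟨b0, -, -, hfib0⟩ :=
      fiber_exchange (fun g : (I × J) ⊕ (I × J) => (Sum.elim id id g).1) A B hcard
    obtain ⟨b, hbB', hbA', hfib⟩ := fiber_exchange (Sum.elim id id)
      (A.filter fun g => (Sum.elim id id g).1 = (Sum.elim id id b0).1)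
      (B.filter fun g => (Sum.elim id id g).1 = (Sum.elim id id b0).1) hfib0
    obtain ⟨p, hp⟩ : ∃ p : I × J, Sum.elim id id b = p := ⟨_, rfl⟩
    obtain ⟨i1, j1⟩ := p
    rw [hp] at hfib
    have hbB : b ∈ B := mem_of_mem_filter b hbB'
    have hbclass : i1 = (Sum.elim id id b0).1 := by
      have h := (mem_filter.mp hbB').2
      rw [hp] at h
      exact h
    rw [← hbclass] at hfib0 hfib
    have hbA : b ∉ A := fun h => hbA' (mem_filter.mpr ⟨h, by rw [hp, ← hbclass]⟩)
    have sA : (A.filter fun g => (Sum.elim id id g).1 = i1).filter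
        (fun g => Sum.elim id id g = (i1, j1))
        = A.filter (fun g => Sum.elim id id g = (i1, j1)) := by
      rw [filter_filter]
      apply filter_congr
      intro g _
      exact ⟨And.right, fun h => ⟨by rw [h], h⟩⟩
    have sB : (B.filter fun g => (Sum.elim id id g).1 = i1).filter
        (fun g => Sum.elim id id g = (i1, j1))
        = B.filter (fun g => Sum.elim id id g = (i1, j1)) := by
      rw [filter_filter]
      apply filter_congr
      intro g _
      exact ⟨And.right, fun h => ⟨by rw [h], h⟩⟩
    have hfib' : ((A.filter fun g => (Sum.elim id id g).1 = i1).filter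
          (fun g => Sum.elim id id g = (i1, j1))).card <
        ((B.filter fun g => (Sum.elim id id g).1 = i1).filter
          (fun g => Sum.elim id id g = (i1, j1))).card := by
      convert hfib using 3
    have cA := congrArg Finset.card sA
    have cB := congrArg Finset.card sB
    have hBpair : (B.filter fun g => Sum.elim id id g = (i1, j1)).card ≤ 1 := by
      have h := hB.1 i1 j1
      rwa [inter_pair_eq] at h
    have hApair0 : (A.filter fun g => Sum.elim id id g = (i1, j1)).card = 0 := by omega
    clear hfib
    refine ⟨b, hbB, hbA, fun i0 j0 => ?_, fun i0 => ?_⟩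
    · rw [inter_pair_eq, filter_insert]
      split_ifs with hpb
      · have h2 := hp.symm.trans hpb
        obtain ⟨h3, h4⟩ := Prod.mk.inj h2
        subst h3; subst h4
        refine le_trans (@Finset.card_insert_le _ (fun a b => Classical.propDecidable (a = b)) _ _) ?_
        omega
      · rw [← inter_pair_eq]
        exact hA.1 i0 j0
    · rw [filter_class_eq, filter_insert]
      split_ifs with hpb
      · have h2 : i1 = i0 := by rw [← hpb, hp]
        subst h2
        have hBclass : (B.filter fun g => (Sum.elim id id g).1 = i1).card
            ≤ K (Sum.inl i1) := by
          have h := hB.2 i1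
          rwa [filter_class_eq] at h
        refine le_trans (@Finset.card_insert_le _ (fun a b => Classical.propDecidable (a = b)) _ _) ?_
        omega
      · rw [← filter_class_eq]
        exact hA.2 i0
  · -- downward closed, matroid 2
    rintro A B hAB h
    exact fun j => le_trans (card_le_card (filter_subset_filter _ hAB)) (h j)
  · -- exchange, matroid 2
    rintro A B hA hB hcard
    obtain ⟨b, hbB, hbA, hfib⟩ :=
      fiber_exchange (Sum.elim (fun _ => (none : Option J)) (fun e => some e.2)) A B hcard
    refine ⟨b, hbB, hbA, fun j => ?_⟩
    rw [filter_j_eq, filter_insert]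
    split_ifs with hpb
    · rw [hpb] at hfib
      have hBj : (B.filter (fun g =>
          (Sum.elim (fun _ => (none : Option J)) (fun e => some e.2) g) = some j)).card
            ≤ K (Sum.inr j) := by
        have h := hB j
        rwa [filter_j_eq] at h
      have hfib' : (A.filter (fun g =>
          (Sum.elim (fun _ => (none : Option J)) (fun e => some e.2) g) = some j)).card <
        (B.filter (fun g =>
          (Sum.elim (fun _ => (none : Option J)) (fun e => some e.2) g) = some j)).card := by
        convert hfib using 3
      refine le_trans (@Finset.card_insert_le _ (fun a b => Classical.propDecidable (a = b)) _ _) ?_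
      omega
    · rw [← filter_j_eq]
      exact hA j
  · -- the intersection characterization
    intro A
    constructor
    · rintro ⟨hp, hi, hj⟩
      refine ⟨⟨fun i j => (pair_card_iff A (by simp)).mpr (hp i j), fun i => ?_⟩, hj⟩
      rw [← filter_split_card]
      exact hi i
    · rintro ⟨⟨hp, hi⟩, hj⟩
      refine ⟨fun i j => (pair_card_iff A (by simp)).mp (hp i j), fun i => ?_, hj⟩
      rw [filter_split_card]
      exact hi i
end
end

section
/- Let X be a finite set, φ¹, φ² : X → [0,1], K a nonnegative integer, and f(B) = max{ ∑_{x∈S} φ²(x) : S ⊆ B, |S| ≤ K } for B ⊆ X. Consider the linear program D: minimize θ + ∑_{x∈X} φ¹(x)·γ(x) over θ ∈ ℝ and γ : X → ℝ subject to θ + ∑_{x∈B} γ(x) ≥ f(B) for every B ⊆ X. Then D attains its optimal value at a feasible point (θ*, γ*) with θ* ≥ 0 and γ*(x) ≥ 0 for every x ∈ X. -/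
/-!
Minimise the objective over the feasible points in the compact box `[0, f X] × [0, 1]^X`, where
`f = bestSum · K φ²`. Every feasible `(θ, γ)` can be moved into this box without increasing the
objective: the negative part of `γ` is folded into `θ` (this keeps feasibility because `f` is
monotone, and lowers the objective because `φ¹ ≤ 1`), then `γ` is capped at `1` (an element with
`γ x > 1` is paid for in full, as `φ² ≤ 1`), and finally `θ` is capped at `f X`.
-/

open scoped Classical
noncomputable section

open Finset

section BestSum

variable {α : Type*} {s t S : Finset α} {K : ℕ} {φ : α → ℝ}

lemma sum_le_bestSum (hS : S ⊆ s) (hK : S.card ≤ K) : ∑ x ∈ S, φ x ≤ bestSum s K φ :=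
  le_sup' (fun S => ∑ x ∈ S, φ x) (mem_filter.2 ⟨mem_powerset.2 hS, hK⟩)

lemma bestSum_le {c : ℝ} (h : ∀ S ⊆ s, S.card ≤ K → ∑ x ∈ S, φ x ≤ c) : bestSum s K φ ≤ c :=
  sup'_le _ _ fun S hS => by
    obtain ⟨hSs, hK⟩ := mem_filter.1 hS
    exact h S (mem_powerset.1 hSs) hK

lemma bestSum_nonneg : 0 ≤ bestSum s K φ := by
  simpa using sum_le_bestSum (φ := φ) (empty_subset s) (Nat.zero_le K)

lemma bestSum_mono_s11 (K : ℕ) (φ : α → ℝ) : Monotone (bestSum · K φ) :=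
  fun _ _ hst => bestSum_le fun _ hS hK => sum_le_bestSum (hS.trans hst) hK

lemma bestSum_union_le (hφ : ∀ x, 0 ≤ φ x) :
    bestSum (s ∪ t) K φ ≤ bestSum s K φ + ∑ x ∈ t, φ x := by
  refine bestSum_le fun S hS hK => ?_
  rw [← sum_filter_add_sum_filter_not S (· ∈ s)]
  refine add_le_add
    (sum_le_bestSum (fun x hx => (mem_filter.1 hx).2) ((card_filter_le _ _).trans hK))
    (sum_le_sum_of_subset_of_nonneg (fun x hx => ?_) fun x _ _ => hφ x)
  obtain ⟨hxS, hxs⟩ := mem_filter.1 hx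
  exact (mem_union.1 (hS hxS)).resolve_left hxs

end BestSum

section Dual

variable {X : Type*} {f : Finset X → ℝ} {θ θ₁ θ₂ : ℝ} {γ : X → ℝ}

def DualFeasible (f : Finset X → ℝ) (θ : ℝ) (γ : X → ℝ) : Prop :=
  ∀ B : Finset X, f B ≤ θ + ∑ x ∈ B, γ x

def dualObjective [Fintype X] (φ : X → ℝ) (θ : ℝ) (γ : X → ℝ) : ℝ :=
  θ + ∑ x, φ x * γ x

lemma continuous_dualObjective [Fintype X] (φ : X → ℝ) :
    Continuous fun p : ℝ × (X → ℝ) => dualObjective φ p.1 p.2 := by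
  unfold dualObjective
  fun_prop

lemma isClosed_setOf_dualFeasible (f : Finset X → ℝ) :
    IsClosed {p : ℝ × (X → ℝ) | DualFeasible f p.1 p.2} := by
  simp only [DualFeasible, Set.ofPred_forall]
  exact isClosed_iInter fun B => isClosed_le continuous_const (by fun_prop)

lemma DualFeasible.nonneg (h : DualFeasible f θ γ) (hf : 0 ≤ f ∅) : 0 ≤ θ := by
  simpa using hf.trans (h ∅)

lemma dualFeasible_min (h₁ : DualFeasible f θ₁ γ) (h₂ : DualFeasible f θ₂ γ) :
    DualFeasible f (min θ₁ θ₂) γ := fun B => by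
  rw [← min_add_add_right]
  exact le_min (h₁ B) (h₂ B)

lemma dualFeasible_apply_univ [Fintype X] (hf : Monotone f) (hγ : ∀ x, 0 ≤ γ x) :
    DualFeasible f (f univ) γ := fun B =>
  (hf (subset_univ B)).trans (le_add_of_nonneg_right (sum_nonneg fun x _ => hγ x))

lemma DualFeasible.posPart [Fintype X] (hf : Monotone f) (h : DualFeasible f θ γ) :
    DualFeasible f (θ + ∑ x, min (γ x) 0) fun x => max (γ x) 0 := by
  intro B
  set C := B ∪ univ.filter (γ · < 0)
  have hmax : ∑ x ∈ C, max (γ x) 0 = ∑ x ∈ B, max (γ x) 0 := by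
    refine (sum_subset subset_union_left fun x hxC hxB => max_eq_right ?_).symm
    simp only [mem_union, hxB, mem_filter, mem_univ, true_and, false_or] at hxC
    exact hxC.le
  have hmin : ∑ x ∈ C, min (γ x) 0 = ∑ x, min (γ x) 0 :=
    sum_subset (subset_univ C) fun x _ hxC => min_eq_right <| by
      simp only [C, mem_union, mem_filter, mem_univ, true_and, not_or, not_lt] at hxC
      exact hxC.2
  calc f B ≤ f C := hf subset_union_left
    _ ≤ θ + ∑ x ∈ C, γ x := h C
    _ = θ + ∑ x ∈ C, (max (γ x) 0 + min (γ x) 0) := by simp only [max_add_min, add_zero]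
    _ = θ + ∑ x, min (γ x) 0 + ∑ x ∈ B, max (γ x) 0 := by
      rw [sum_add_distrib, hmax, hmin]
      ring

lemma DualFeasible.bestSum_min_one {K : ℕ} {φ : X → ℝ} (hφ : ∀ x, 0 ≤ φ x ∧ φ x ≤ 1)
    (h : DualFeasible (bestSum · K φ) θ γ) :
    DualFeasible (bestSum · K φ) θ fun x => min (γ x) 1 := by
  intro B
  set small := B.filter (γ · ≤ 1)
  set large := B.filter fun x => ¬γ x ≤ 1
  calc bestSum B K φ = bestSum (small ∪ large) K φ := by rw [filter_union_filter_not_eq]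
    _ ≤ bestSum small K φ + ∑ x ∈ large, φ x := bestSum_union_le fun x => (hφ x).1
    _ ≤ θ + ∑ x ∈ small, γ x + ∑ x ∈ large, φ x := by gcongr; exact h small
    _ ≤ θ + ∑ x ∈ small, min (γ x) 1 + ∑ x ∈ large, min (γ x) 1 := by
      refine add_le_add (add_le_add le_rfl (sum_le_sum fun x hx => ?_)) (sum_le_sum fun x hx => ?_)
      · exact le_min le_rfl (mem_filter.1 hx).2
      · have hγx := not_le.1 (mem_filter.1 hx).2
        exact le_min ((hφ x).2.trans hγx.le) (hφ x).2
    _ = θ + ∑ x ∈ B, min (γ x) 1 := by rw [add_assoc, sum_filter_add_sum_filter_not]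

variable [Fintype X] {φ : X → ℝ}

lemma dualObjective_mono (hφ : ∀ x, 0 ≤ φ x) {γ' : X → ℝ} (hθ : θ₁ ≤ θ₂)
    (hγ : ∀ x, γ x ≤ γ' x) : dualObjective φ θ₁ γ ≤ dualObjective φ θ₂ γ' := by
  unfold dualObjective
  gcongr with x
  exacts [hφ x, hγ x]

lemma dualObjective_posPart_le (hφ : ∀ x, φ x ≤ 1) :
    dualObjective φ (θ + ∑ x, min (γ x) 0) (fun x => max (γ x) 0) ≤ dualObjective φ θ γ := by
  unfold dualObjective
  rw [add_assoc, ← sum_add_distrib]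
  gcongr with x
  rcases le_total 0 (γ x) with hγx | hγx
  · simp [hγx]
  · simp only [min_eq_left hγx, max_eq_right hγx, mul_zero, add_zero]
    nlinarith [hφ x]

lemma DualFeasible.exists_mem_box_dualObjective_le {K : ℕ} {φ₁ φ₂ : X → ℝ}
    (hφ₁ : ∀ x, 0 ≤ φ₁ x ∧ φ₁ x ≤ 1) (hφ₂ : ∀ x, 0 ≤ φ₂ x ∧ φ₂ x ≤ 1)
    (h : DualFeasible (bestSum · K φ₂) θ γ) :
    ∃ p ∈ Set.Icc 0 (bestSum univ K φ₂) ×ˢ Set.univ.pi fun _ => Set.Icc 0 1,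
      DualFeasible (bestSum · K φ₂) p.1 p.2 ∧ dualObjective φ₁ p.1 p.2 ≤ dualObjective φ₁ θ γ := by
  have hf := bestSum_mono_s11 K φ₂
  set θ' := θ + ∑ x, min (γ x) 0
  set γ' := fun x => min (max (γ x) 0) 1
  have hγ' : ∀ x, γ' x ∈ Set.Icc 0 1 := fun x =>
    ⟨le_min (le_max_right _ _) zero_le_one, min_le_right _ _⟩
  have hfeas : DualFeasible (bestSum · K φ₂) θ' γ' := (h.posPart hf).bestSum_min_one hφ₂
  refine ⟨(min θ' (bestSum univ K φ₂), γ'),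
    ⟨⟨le_min (hfeas.nonneg bestSum_nonneg) bestSum_nonneg, min_le_right _ _⟩, fun x _ => hγ' x⟩,
    dualFeasible_min hfeas (dualFeasible_apply_univ hf fun x => (hγ' x).1), ?_⟩
  calc dualObjective φ₁ (min θ' (bestSum univ K φ₂)) γ'
      ≤ dualObjective φ₁ θ' fun x => max (γ x) 0 :=
        dualObjective_mono (fun x => (hφ₁ x).1) (min_le_left _ _) fun x => min_le_left _ _
    _ ≤ dualObjective φ₁ θ γ := dualObjective_posPart_le fun x => (hφ₁ x).2

end Dual

/-- the dual `D` of the per-user distribution problem attains its optimal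
value at a feasible point with nonnegative `θ` and `γ`. -/
theorem dual_attains_nonneg_optimum {X : Type*} [Fintype X] (φ1 φ2 : X → ℝ)
    (hφ1 : ∀ x, 0 ≤ φ1 x ∧ φ1 x ≤ 1) (hφ2 : ∀ x, 0 ≤ φ2 x ∧ φ2 x ≤ 1) (K : ℕ) :
    ∃ (θ : ℝ) (γ : X → ℝ),
      (∀ B : Finset X, bestSum B K φ2 ≤ θ + ∑ x ∈ B, γ x) ∧
      0 ≤ θ ∧ (∀ x, 0 ≤ γ x) ∧
      ∀ (θ' : ℝ) (γ' : X → ℝ),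
        (∀ B : Finset X, bestSum B K φ2 ≤ θ' + ∑ x ∈ B, γ' x) →
        θ + ∑ x, φ1 x * γ x ≤ θ' + ∑ x, φ1 x * γ' x := by
  set M := bestSum univ K φ2
  have hbox : IsCompact (Set.Icc 0 M ×ˢ Set.univ.pi fun _ : X => Set.Icc (0 : ℝ) 1) :=
    isCompact_Icc.prod (isCompact_univ_pi fun _ => isCompact_Icc)
  have hM : (M, 0) ∈ {p | DualFeasible (bestSum · K φ2) p.1 p.2} ∩
      Set.Icc 0 M ×ˢ Set.univ.pi fun _ => Set.Icc 0 1 :=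
    ⟨dualFeasible_apply_univ (bestSum_mono_s11 K φ2) fun _ => le_rfl,
      ⟨bestSum_nonneg, le_rfl⟩, fun _ _ => ⟨le_rfl, zero_le_one⟩⟩
  obtain ⟨p, ⟨hp, hpM, hp1⟩, hmin⟩ :=
    (hbox.inter_left (isClosed_setOf_dualFeasible _)).exists_isMinOn ⟨_, hM⟩
      (continuous_dualObjective φ1).continuousOn
  refine ⟨p.1, p.2, hp, hpM.1, fun x => (hp1 x trivial).1, fun θ' γ' h' => ?_⟩
  obtain ⟨q, hqbox, hq, hle⟩ := DualFeasible.exists_mem_box_dualObjective_le hφ1 hφ2 h'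
  exact (hmin ⟨hq, hqbox⟩).trans hle
end
end

section
/- Let X be a finite set, φ¹, φ² : X → [0,1], K a nonnegative integer with K ≤ |X|, and f(B) = max{ ∑_{x∈S} φ²(x) : S ⊆ B, |S| ≤ K } for B ⊆ X. Consider the linear program D: minimize θ + ∑_{x∈X} φ¹(x)·γ(x) over θ ∈ ℝ and γ : X → ℝ subject to θ + ∑_{x∈B} γ(x) ≥ f(B) for every B ⊆ X. Then there exist an optimal solution (θ*, γ*) of D with θ* ≥ 0 and γ*(x) ≥ 0 for all x, a subset B* ⊆ X with |B*| = K, and a real number α* ≥ 0, such that φ²(x) − γ*(x) = α* for every x ∈ B*, φ²(x) − γ*(x) ≤ α* for every x ∈ X∖B*, and θ* = K·α*. -/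
open scoped Classical
noncomputable section

/-!
For any threshold `α ≥ 0`, the point `θ = K α`, `γ x = max (φ² x - α) 0` is feasible for `D`
and has the required shape. Its optimality is certified by a primal solution: list `X` by
decreasing `φ²` and apply systematic sampling, with uniform offset `u ∈ (0, 1)`, to the partial
sums `cₘ` of `φ¹` along this list. Each `x` is then selected with probability `φ¹ x`, and the
first `m` elements contain exactly `⌈cₘ - u⌉` selected ones. Taking for `α` the `φ²`-value at the
position where `cₘ` first reaches `K` (or `α = 0` if it never does), every sampled set `B` has a
`K`-subset containing all its elements above `α` and none below, so the constraint of `(θ, γ)`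
is tight on `B`. Averaging the constraints of any feasible `(θ', γ')` over `u` gives weak duality.
-/

open Finset MeasureTheory

lemma Int.ceil_sub_ceil_eq_ite {R : Type*} [Ring R] [LinearOrder R] [IsStrictOrderedRing R]
    [FloorRing R] {a b : R} (hab : a ≤ b) (hba : b ≤ a + 1) :
    ⌈b⌉ - ⌈a⌉ = if ⌈a⌉ < ⌈b⌉ then 1 else 0 := by
  have h₁ : ⌈a⌉ ≤ ⌈b⌉ := Int.ceil_mono hab
  have h₂ : ⌈b⌉ ≤ ⌈a⌉ + 1 := (Int.ceil_mono hba).trans_eq (Int.ceil_add_one a)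
  split_ifs <;> omega

lemma ceil_sub_eq_floor_add_indicator {c u : ℝ} (hu : u ∈ Set.Ioo (0 : ℝ) 1) :
    (⌈c - u⌉ : ℝ) = ⌊c⌋ + (Set.Iio (Int.fract c)).indicator 1 u := by
  have hc : c - u = (Int.fract c - u) + ⌊c⌋ := by rw [Int.fract]; ring
  rw [hc, Int.ceil_add_intCast, Int.cast_add, add_comm]
  congr 1
  by_cases h : u < Int.fract c
  · have : ⌈Int.fract c - u⌉ = 1 := by
      rw [Int.ceil_eq_iff]; constructor <;> norm_num <;> linarith [Int.fract_lt_one c, hu.1]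
    simp [this, h]
  · have : ⌈Int.fract c - u⌉ = 0 := by
      rw [Int.ceil_eq_iff]; constructor <;> norm_num <;> linarith [Int.fract_nonneg c, hu.2]
    simp [this, h]

lemma integrableOn_ceil_sub (c : ℝ) :
    IntegrableOn (fun u : ℝ => (⌈c - u⌉ : ℝ)) (Set.Ioo 0 1) := by
  refine (AntitoneOn.integrableOn_isCompact isCompact_Icc ?_).mono_set Set.Ioo_subset_Icc_self
  intro u _ v _ huv
  show ((⌈c - v⌉ : ℤ) : ℝ) ≤ ⌈c - u⌉
  exact_mod_cast Int.ceil_mono (by linarith : c - v ≤ c - u)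

lemma integral_ceil_sub (c : ℝ) : ∫ u in Set.Ioo 0 1, (⌈c - u⌉ : ℝ) = c := by
  have hfin : volume (Set.Ioo (0 : ℝ) 1) ≠ ⊤ := by simp
  have hfloor : IntegrableOn (fun _ ↦ (⌊c⌋ : ℝ)) (Set.Ioo (0 : ℝ) 1) := integrableOn_const hfin
  have hind : IntegrableOn ((Set.Iio (Int.fract c)).indicator 1) (Set.Ioo (0 : ℝ) 1) :=
    (integrableOn_const hfin (C := (1 : ℝ))).indicator measurableSet_Iio
  have hinter : Set.Iio (Int.fract c) ∩ Set.Ioo 0 1 = Set.Ioo 0 (Int.fract c) := by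
    ext u
    simp only [Set.mem_inter_iff, Set.mem_Iio, Set.mem_Ioo]
    exact ⟨fun ⟨h, h0, _⟩ ↦ ⟨h0, h⟩, fun ⟨h0, h⟩ ↦ ⟨h, h0, h.trans (Int.fract_lt_one c)⟩⟩
  rw [setIntegral_congr_fun measurableSet_Ioo fun u hu ↦ ceil_sub_eq_floor_add_indicator hu,
    integral_add hfloor hind, setIntegral_const, integral_indicator measurableSet_Iio,
    Measure.restrict_restrict measurableSet_Iio, hinter]
  simp [Int.fract_nonneg c]

/-- Systematic sampling with offset `u` along the weights `p`: index `i` is selected when an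
integer lies in `(cᵢ - u, cᵢ₊₁ - u]`, where `cᵢ = p 0 + ⋯ + p (i - 1)`. -/
def IsSampled (p : ℕ → ℝ) (u : ℝ) (i : ℕ) : Prop :=
  ⌈∑ j ∈ range i, p j - u⌉ < ⌈∑ j ∈ range (i + 1), p j - u⌉

section SystematicSampling

variable {p : ℕ → ℝ} (hp : ∀ i, p i ∈ Set.Icc 0 1)
include hp

lemma ite_isSampled_eq (u : ℝ) (i : ℕ) :
    (if IsSampled p u i then 1 else 0 : ℝ) =
      ⌈∑ j ∈ range (i + 1), p j - u⌉ - ⌈∑ j ∈ range i, p j - u⌉ := by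
  have h := Int.ceil_sub_ceil_eq_ite (a := ∑ j ∈ range i, p j - u)
    (b := ∑ j ∈ range (i + 1), p j - u)
    (by rw [sum_range_succ]; linarith [(hp i).1]) (by rw [sum_range_succ]; linarith [(hp i).2])
  rw [IsSampled]
  exact_mod_cast h.symm

lemma integrableOn_ite_isSampled (i : ℕ) :
    IntegrableOn (fun u ↦ if IsSampled p u i then (1 : ℝ) else 0) (Set.Ioo 0 1) := by
  simp_rw [ite_isSampled_eq hp]
  exact (integrableOn_ceil_sub _).sub (integrableOn_ceil_sub _)

lemma integral_ite_isSampled (i : ℕ) :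
    ∫ u in Set.Ioo 0 1, (if IsSampled p u i then 1 else 0 : ℝ) = p i := by
  simp_rw [ite_isSampled_eq hp]
  rw [integral_sub (integrableOn_ceil_sub _) (integrableOn_ceil_sub _), integral_ceil_sub,
    integral_ceil_sub, sum_range_succ, add_sub_cancel_left]

lemma card_filter_isSampled_range {u : ℝ} (hu : u ∈ Set.Ioo (0 : ℝ) 1) (m : ℕ) :
    (#{i ∈ range m | IsSampled p u i} : ℤ) = ⌈∑ i ∈ range m, p i - u⌉ := by
  have hzero : ⌈∑ i ∈ range 0, p i - u⌉ = 0 := by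
    rw [Int.ceil_eq_zero_iff]; simp only [range_zero, sum_empty, zero_sub, Set.mem_Ioc]
    constructor <;> linarith [hu.1, hu.2]
  have h : ((#{i ∈ range m | IsSampled p u i} : ℕ) : ℝ) = ⌈∑ i ∈ range m, p i - u⌉ := by
    rw [← sum_boole, sum_congr rfl fun i _ ↦ ite_isSampled_eq hp u i,
      sum_range_sub (fun i ↦ (⌈∑ j ∈ range i, p j - u⌉ : ℝ)), hzero,
      Int.cast_zero, sub_zero]
  exact_mod_cast h

end SystematicSampling

section Rounding

variable {X : Type*} {n : ℕ} (e : Fin n ≃ X)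

def weightsAlong (φ : X → ℝ) (i : ℕ) : ℝ := if h : i < n then φ (e ⟨i, h⟩) else 0

lemma weightsAlong_symm_apply (φ : X → ℝ) (x : X) : weightsAlong e φ (e.symm x) = φ x := by
  simp [weightsAlong]

lemma weightsAlong_mem_Icc {φ : X → ℝ} (hφ : ∀ x, φ x ∈ Set.Icc 0 1) (i : ℕ) :
    weightsAlong e φ i ∈ Set.Icc 0 1 := by
  unfold weightsAlong
  split_ifs
  · exact hφ _
  · exact ⟨le_rfl, zero_le_one⟩

lemma sum_weightsAlong_le {φ : X → ℝ} (hφ : ∀ x, φ x ∈ Set.Icc 0 1) (m : ℕ) :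
    ∑ i ∈ range m, weightsAlong e φ i ≤ m := by
  simpa using sum_le_sum fun i (_ : i ∈ range m) ↦ (weightsAlong_mem_Icc e hφ i).2

variable [Fintype X]

/-- For `u` uniform on `(0, 1)` these sets form the primal solution: `x` is included with
probability `φ x`. -/
def roundedSet (φ : X → ℝ) (u : ℝ) : Finset X := {x | IsSampled (weightsAlong e φ) u (e.symm x)}

lemma sum_roundedSet_eq (φ w : X → ℝ) (u : ℝ) :
    ∑ x ∈ roundedSet e φ u, w x =
      ∑ x, w x * if IsSampled (weightsAlong e φ) u (e.symm x) then 1 else 0 := by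
  simp [roundedSet, sum_filter]

lemma card_filter_symm_lt {m : ℕ} (hm : m ≤ n) (Q : ℕ → Prop) :
    #{x | (e.symm x : ℕ) < m ∧ Q (e.symm x)} = #{i ∈ range m | Q i} := by
  refine card_bij (fun x _ ↦ (e.symm x : ℕ)) (by simp)
    (fun x _ y _ h ↦ e.symm.injective (Fin.ext h)) ?_
  intro i hi
  rw [mem_filter, mem_range] at hi
  exact ⟨e ⟨i, hi.1.trans_le hm⟩, by simpa using hi, by simp⟩

variable {φ : X → ℝ} (hφ : ∀ x, φ x ∈ Set.Icc 0 1)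
include hφ

lemma card_filter_roundedSet {u : ℝ} (hu : u ∈ Set.Ioo (0 : ℝ) 1) {m : ℕ} (hm : m ≤ n) :
    (#{x ∈ roundedSet e φ u | (e.symm x : ℕ) < m} : ℤ) =
      ⌈∑ i ∈ range m, weightsAlong e φ i - u⌉ := by
  rw [← card_filter_isSampled_range (weightsAlong_mem_Icc e hφ) hu, ← card_filter_symm_lt e hm]
  simp only [roundedSet, filter_filter, and_comm]

lemma integrableOn_add_sum_roundedSet (θ : ℝ) (w : X → ℝ) :
    IntegrableOn (fun u ↦ θ + ∑ x ∈ roundedSet e φ u, w x) (Set.Ioo 0 1) := by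
  have hθ : IntegrableOn (fun _ ↦ θ) (Set.Ioo (0 : ℝ) 1) := integrableOn_const (by simp)
  simp_rw [sum_roundedSet_eq e φ]
  exact hθ.add (integrable_finsetSum _ fun x _ ↦
    (integrableOn_ite_isSampled (weightsAlong_mem_Icc e hφ) _).const_mul _)

lemma integral_add_sum_roundedSet (θ : ℝ) (w : X → ℝ) :
    ∫ u in Set.Ioo 0 1, (θ + ∑ x ∈ roundedSet e φ u, w x) = θ + ∑ x, φ x * w x := by
  have hθ : IntegrableOn (fun _ ↦ θ) (Set.Ioo (0 : ℝ) 1) := integrableOn_const (by simp)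
  have hint := fun x ↦
    (integrableOn_ite_isSampled (weightsAlong_mem_Icc e hφ) (e.symm x)).const_mul (w x)
  simp_rw [sum_roundedSet_eq e φ]
  rw [integral_add hθ (integrable_finsetSum _ fun x _ ↦ hint x),
    integral_finsetSum _ fun x _ ↦ hint x, setIntegral_const]
  simp only [integral_const_mul, integral_ite_isSampled (weightsAlong_mem_Icc e hφ),
    weightsAlong_symm_apply, mul_comm]
  simp

lemma objective_le_of_tight_on_roundedSet (f : Finset X → ℝ) {θ θ' : ℝ} {γ γ' : X → ℝ}
    (htight : ∀ u ∈ Set.Ioo (0 : ℝ) 1,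
      θ + ∑ x ∈ roundedSet e φ u, γ x ≤ f (roundedSet e φ u))
    (hfeas : ∀ B, f B ≤ θ' + ∑ x ∈ B, γ' x) :
    θ + ∑ x, φ x * γ x ≤ θ' + ∑ x, φ x * γ' x := by
  rw [← integral_add_sum_roundedSet e hφ, ← integral_add_sum_roundedSet e hφ]
  exact setIntegral_mono_on (integrableOn_add_sum_roundedSet e hφ _ _)
    (integrableOn_add_sum_roundedSet e hφ _ _) measurableSet_Ioo
    fun u hu ↦ (htight u hu).trans (hfeas _)

end Rounding

lemma exists_equiv_fin_antitone {X β : Type*} [Fintype X] [LinearOrder β] (f : X → β) :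
    ∃ e : Fin (Fintype.card X) ≃ X, Antitone (f ∘ e) := by
  let g := (Fintype.equivFin X).symm
  exact ⟨(Tuple.sort (OrderDual.toDual ∘ f ∘ g)).trans g,
    monotone_toDual_comp_iff.mp (Tuple.monotone_sort (OrderDual.toDual ∘ f ∘ g))⟩

section BestSum

variable {X : Type*} {K : ℕ} {φ : X → ℝ} {α : ℝ}

lemma le_bestSum_s13 {S B : Finset X} (hSB : S ⊆ B) (hSK : #S ≤ K) : ∑ x ∈ S, φ x ≤ bestSum B K φ :=
  le_sup' (fun S ↦ ∑ x ∈ S, φ x) (mem_filter.mpr ⟨mem_powerset.mpr hSB, hSK⟩)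

lemma bestSum_le_mul_add_sum_max (hα : 0 ≤ α) (B : Finset X) :
    bestSum B K φ ≤ K * α + ∑ x ∈ B, max (φ x - α) 0 := by
  refine sup'_le _ _ fun S hS ↦ ?_
  obtain ⟨hSB, hSK⟩ := mem_filter.mp hS
  calc ∑ x ∈ S, φ x ≤ ∑ x ∈ S, (α + max (φ x - α) 0) :=
        sum_le_sum fun x _ ↦ by linarith [le_max_left (φ x - α) 0]
    _ = #S * α + ∑ x ∈ S, max (φ x - α) 0 := by rw [sum_add_distrib, sum_const, nsmul_eq_mul]
    _ ≤ K * α + ∑ x ∈ B, max (φ x - α) 0 := by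
        gcongr ?_ * _ + ?_
        · exact_mod_cast hSK
        · exact sum_le_sum_of_subset_of_nonneg (mem_powerset.mp hSB)
            fun x _ _ ↦ le_max_right (φ x - α) 0

lemma mul_add_sum_max_le_bestSum {C S : Finset X} (hSC : S ⊆ C) (hSK : #S ≤ K)
    (hα : #S = K ∨ α = 0) (hS : ∀ x ∈ S, α ≤ φ x) (hC : ∀ x ∈ C, α < φ x → x ∈ S) :
    K * α + ∑ x ∈ C, max (φ x - α) 0 ≤ bestSum C K φ := by
  have hsum : ∑ x ∈ C, max (φ x - α) 0 = ∑ x ∈ S, (φ x - α) := by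
    rw [← sum_subset hSC fun x hxC hxS ↦ max_eq_right (by
      linarith [not_lt.mp (mt (hC x hxC) hxS)])]
    exact sum_congr rfl fun x hx ↦ max_eq_left (by linarith [hS x hx])
  have hKα : (K : ℝ) * α = #S * α := by
    rcases hα with h | h <;> simp [h]
  calc K * α + ∑ x ∈ C, max (φ x - α) 0 = ∑ x ∈ S, φ x := by
        rw [hsum, hKα, sum_sub_distrib, sum_const, nsmul_eq_mul]; ring
    _ ≤ bestSum C K φ := le_bestSum_s13 hSC hSK

end BestSum

section Threshold

variable {X : Type*} [Fintype X] {n : ℕ} (e : Fin n ≃ X) {φ₁ φ₂ : X → ℝ} {K : ℕ}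

/-- `tight` certifies the optimality of `θ = K α`, `γ = max (φ₂ - α) 0`, and `le_of_index_lt`
gives `φ₂ - γ = α` on `B* = e '' {0, …, K - 1}`. -/
structure IsTightThreshold (φ₁ φ₂ : X → ℝ) (K : ℕ) (α : ℝ) : Prop where
  nonneg : 0 ≤ α
  le_of_index_lt : ∀ x, (e.symm x : ℕ) < K → α ≤ φ₂ x
  tight : ∀ u ∈ Set.Ioo (0 : ℝ) 1,
    K * α + ∑ x ∈ roundedSet e φ₁ u, max (φ₂ x - α) 0 ≤ bestSum (roundedSet e φ₁ u) K φ₂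

variable (hφ₁ : ∀ x, φ₁ x ∈ Set.Icc 0 1) (hanti : Antitone (φ₂ ∘ e))
include hφ₁

lemma exists_isTightThreshold_of_sum_lt (hφ₂ : ∀ x, 0 ≤ φ₂ x)
    (hsumK : ∑ i ∈ range n, weightsAlong e φ₁ i < K) :
    ∃ α, IsTightThreshold e φ₁ φ₂ K α := by
  refine ⟨0, le_rfl, fun x _ ↦ hφ₂ x, fun u hu ↦ ?_⟩
  have hcard : #(roundedSet e φ₁ u) ≤ K := by
    have h := card_filter_roundedSet e hφ₁ hu le_rfl
    rw [filter_true_of_mem fun x _ ↦ (e.symm x).isLt] at h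
    have : ⌈∑ i ∈ range n, weightsAlong e φ₁ i - u⌉ ≤ K :=
      Int.ceil_le.mpr (by push_cast; linarith [hu.1])
    omega
  exact mul_add_sum_max_le_bestSum subset_rfl hcard (.inr rfl) (fun x _ ↦ hφ₂ x)
    fun x hx _ ↦ hx

include hanti

/-- With `r` the first index at which the partial sums of `φ₁` reach `K`, the threshold is the
`φ₂`-value at index `r - 1`: every rounded set has at most `K` elements among the first `r - 1`
and at least `K` among the first `r`. -/
lemma exists_isTightThreshold_of_le_sum (hφ₂ : ∀ x, 0 ≤ φ₂ x) (hK : 0 < K)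
    (hKsum : (K : ℝ) ≤ ∑ i ∈ range n, weightsAlong e φ₁ i) :
    ∃ α, IsTightThreshold e φ₁ φ₂ K α := by
  have hex : ∃ m, (K : ℝ) ≤ ∑ i ∈ range m, weightsAlong e φ₁ i := ⟨n, hKsum⟩
  set r := Nat.find hex
  have hr : (K : ℝ) ≤ ∑ i ∈ range r, weightsAlong e φ₁ i := Nat.find_spec hex
  have hrn : r ≤ n := Nat.find_min' hex hKsum
  have hr0 : r ≠ 0 := fun h ↦ by simp [h] at hr; omega
  have hr' : ¬ (K : ℝ) ≤ ∑ i ∈ range (r - 1), weightsAlong e φ₁ i := Nat.find_min hex (by omega)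
  have hKr : K ≤ r := by exact_mod_cast hr.trans (sum_weightsAlong_le e hφ₁ r)
  let i₀ : Fin n := ⟨r - 1, by omega⟩
  have above : ∀ x, (e.symm x : ℕ) ≤ r - 1 → φ₂ (e i₀) ≤ φ₂ x := fun x hx ↦ by
    simpa using hanti (show e.symm x ≤ i₀ from hx)
  have below : ∀ x, r - 1 ≤ (e.symm x : ℕ) → φ₂ x ≤ φ₂ (e i₀) := fun x hx ↦ by
    simpa using hanti (show i₀ ≤ e.symm x from hx)
  refine ⟨φ₂ (e i₀), hφ₂ _, fun x hx ↦ above x (by omega), fun u hu ↦ ?_⟩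
  have hAK : #{x ∈ roundedSet e φ₁ u | (e.symm x : ℕ) < r - 1} ≤ K := by
    have := card_filter_roundedSet e hφ₁ hu (m := r - 1) (by omega)
    have : ⌈∑ i ∈ range (r - 1), weightsAlong e φ₁ i - u⌉ ≤ K :=
      Int.ceil_le.mpr (by push_cast; linarith [hu.1])
    omega
  have hKD : K ≤ #{x ∈ roundedSet e φ₁ u | (e.symm x : ℕ) < r} := by
    have := card_filter_roundedSet e hφ₁ hu hrn
    have : (K : ℤ) - 1 < ⌈∑ i ∈ range r, weightsAlong e φ₁ i - u⌉ :=
      Int.lt_ceil.mpr (by push_cast; linarith [hu.2])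
    omega
  have hAD : {x ∈ roundedSet e φ₁ u | (e.symm x : ℕ) < r - 1} ⊆
      {x ∈ roundedSet e φ₁ u | (e.symm x : ℕ) < r} :=
    monotone_filter_right _ fun x hx ↦ by omega
  obtain ⟨S, hAS, hSD, hSK⟩ := exists_subsuperset_card_eq hAD hAK hKD
  refine mul_add_sum_max_le_bestSum (hSD.trans (filter_subset _ _)) hSK.le (.inl hSK)
    (fun x hx ↦ above x ?_) fun x hxC hx ↦ hAS (mem_filter.mpr ⟨hxC, ?_⟩)
  · have := (mem_filter.mp (hSD hx)).2
    omega
  · by_contra h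
    exact (below x (by omega)).not_gt hx

lemma exists_isTightThreshold (hφ₂ : ∀ x, φ₂ x ∈ Set.Icc 0 1) :
    ∃ α, IsTightThreshold e φ₁ φ₂ K α := by
  rcases Nat.eq_zero_or_pos K with rfl | hK
  · refine ⟨1, zero_le_one, by simp, fun u _ ↦ ?_⟩
    exact mul_add_sum_max_le_bestSum (empty_subset _) (by simp) (.inl rfl) (by simp)
      fun x _ hx ↦ absurd hx (not_lt.mpr (hφ₂ x).2)
  rcases lt_or_ge (∑ i ∈ range n, weightsAlong e φ₁ i) K with hlt | hle
  · exact exists_isTightThreshold_of_sum_lt e hφ₁ (fun x ↦ (hφ₂ x).1) hlt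
  · exact exists_isTightThreshold_of_le_sum e hφ₁ hanti (fun x ↦ (hφ₂ x).1) hK hle

end Threshold

/-- structure of an optimal dual solution: there is an optimal solution
`(θ*, γ*)` with nonnegative entries, a set `B*` of cardinality `K`, and `α* ≥ 0` with
`φ²(x) - γ*(x) = α*` on `B*`, `φ²(x) - γ*(x) ≤ α*` off `B*`, and `θ* = K·α*`. -/
theorem dual_optimal_structure {X : Type*} [Fintype X] (φ1 φ2 : X → ℝ)
    (hφ1 : ∀ x, 0 ≤ φ1 x ∧ φ1 x ≤ 1) (hφ2 : ∀ x, 0 ≤ φ2 x ∧ φ2 x ≤ 1)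
    (K : ℕ) (hK : K ≤ Fintype.card X) :
    ∃ (θ : ℝ) (γ : X → ℝ) (Bstar : Finset X) (α : ℝ),
      (∀ B : Finset X, bestSum B K φ2 ≤ θ + ∑ x ∈ B, γ x) ∧
      (∀ (θ' : ℝ) (γ' : X → ℝ),
        (∀ B : Finset X, bestSum B K φ2 ≤ θ' + ∑ x ∈ B, γ' x) →
        θ + ∑ x, φ1 x * γ x ≤ θ' + ∑ x, φ1 x * γ' x) ∧
      0 ≤ θ ∧ (∀ x, 0 ≤ γ x) ∧
      Bstar.card = K ∧ 0 ≤ α ∧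
      (∀ x ∈ Bstar, φ2 x - γ x = α) ∧
      (∀ x ∉ Bstar, φ2 x - γ x ≤ α) ∧
      θ = K * α := by
  obtain ⟨e, hanti⟩ := exists_equiv_fin_antitone φ2
  obtain ⟨α, hα, hαK, htight⟩ := exists_isTightThreshold e hφ1 hanti (K := K) hφ2
  refine ⟨K * α, fun x ↦ max (φ2 x - α) 0, ({x | (e.symm x : ℕ) < K} : Finset X), α,
    bestSum_le_mul_add_sum_max hα,
    fun θ' γ' hfeas ↦ objective_le_of_tight_on_roundedSet e hφ1 _ htight hfeas,
    by positivity, fun x ↦ le_max_right _ _, ?_, hα, fun x hx ↦ ?_, fun x _ ↦ ?_, rfl⟩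
  · simpa using card_filter_symm_lt e hK fun _ ↦ True
  · simp only [max_eq_left (sub_nonneg.mpr (hαK x (mem_filter.mp hx).2)), sub_sub_cancel]
  · linarith [le_max_left (φ2 x - α) 0]
end
end

section
/- Consider the one-directional sequential design and the corresponding restriction of the DH relaxation: maximize ∑_{(j,i): j∈J, i∈I} φ²_{j,i}·y_{j,i} over x ∈ {0,1}^{E_I} and y ∈ [0,1]^{E_J} subject to y_{j,i} ≤ φ¹_{i,j}·x_{i,j} for every i∈I, j∈J, ∑_{j∈J} x_{i,j} ≤ K_i for every i∈I, and ∑_{i∈I} y_{j,i} ≤ K_j for every j∈J. Let (x*, y*) be an optimal solution of this program, and extend x* by zero on arcs from J. Then M²(x*) ≥ (1 − 1/e) · max{ M²(x) : x ∈ {0,1}^{E⃗}, x_{j,i} = 0 for all j∈J, ∑_{j∈J} x_{i,j} ≤ K_i for every i∈I }. -/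
open scoped Classical
noncomputable section

/-!
For a display `x` supported on `E_I`, the backlog of each `j ∈ J` is an independent random
subset of `I` and `j` keeps its `K_j` best arcs, so `M²(x)` is a sum over `j` of expected
top-`K_j` weights. The probabilities `y_{j,i}` that `j` keeps `i` are feasible for the relaxation
with objective value `M²(x)`, hence `M²(x)` is at most the optimal value. Conversely, sampling
independently with the probabilities `φ¹_{i,j} x*_{i,j} ≥ y*_{j,i}` loses at most the correlation
gap `1 - 1/e` of the weighted rank function of a uniform matroid: decomposing the weights into
threshold layers reduces this to `E[min(#(S ∩ A), K)] ≥ (1 - 1/e) ∑_{a ∈ A} y_a`, which follows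
from `min(n, K) ≥ K (1 - (1 - 1/K)^n)`, `1 - t ≤ e^{-t}` and the concavity of `1 - e^{-u}`.
-/

section Bernoulli

variable {α β : Type*} [Fintype α] [Fintype β] [DecidableEq α] [DecidableEq β]

def bernoulliWeight (p : α → ℝ) (S : Finset α) : ℝ :=
  (∏ a ∈ S, p a) * ∏ a ∈ Sᶜ, (1 - p a)

lemma prod_ite_mem_eq_mul_prod_compl (S : Finset α) (f g : α → ℝ) :
    ∏ a, (if a ∈ S then f a else g a) = (∏ a ∈ S, f a) * ∏ a ∈ Sᶜ, g a := by
  rw [Finset.prod_ite, Finset.filter_mem_eq_inter, Finset.univ_inter]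
  congr 2
  ext a
  simp

lemma bernoulliWeight_eq_prod (p : α → ℝ) (S : Finset α) :
    bernoulliWeight p S = ∏ a, if a ∈ S then p a else 1 - p a :=
  (prod_ite_mem_eq_mul_prod_compl S p (1 - p ·)).symm

lemma bernoulliWeight_nonneg {p : α → ℝ} (hp : ∀ a, 0 ≤ p a ∧ p a ≤ 1) (S : Finset α) :
    0 ≤ bernoulliWeight p S :=
  mul_nonneg (Finset.prod_nonneg fun a _ => (hp a).1)
    (Finset.prod_nonneg fun a _ => sub_nonneg.2 (hp a).2)

lemma sum_bernoulliWeight_mul_prod_ite (p X Y : α → ℝ) :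
    ∑ S, bernoulliWeight p S * ∏ a, (if a ∈ S then X a else Y a)
      = ∏ a, (p a * X a + (1 - p a) * Y a) := by
  rw [Fintype.prod_add]
  refine Finset.sum_congr rfl fun S _ => ?_
  rw [bernoulliWeight_eq_prod, ← Finset.prod_mul_distrib, ← prod_ite_mem_eq_mul_prod_compl]
  exact Finset.prod_congr rfl fun a _ => by split_ifs <;> rfl

lemma sum_bernoulliWeight (p : α → ℝ) : ∑ S, bernoulliWeight p S = 1 := by
  simpa using sum_bernoulliWeight_mul_prod_ite p 1 1

lemma sum_bernoulliWeight_mul_ite_mem (p : α → ℝ) (b : α) :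
    ∑ S, bernoulliWeight p S * (if b ∈ S then 1 else 0) = p b := by
  have hprod : ∀ S : Finset α,
      ∏ a, (if a ∈ S then 1 else if a = b then 0 else 1) = if b ∈ S then (1 : ℝ) else 0 := by
    intro S
    by_cases hb : b ∈ S
    · rw [if_pos hb]
      exact Finset.prod_eq_one fun a _ => by grind
    · rw [if_neg hb]
      exact Finset.prod_eq_zero (Finset.mem_univ b) (by simp [hb])
  simp_rw [← hprod, sum_bernoulliWeight_mul_prod_ite]
  rw [Finset.prod_eq_single b (fun a _ hab => by simp [hab]) (by simp)]
  simp

lemma sum_bernoulliWeight_mul_pow_card_inter (p : α → ℝ) (A : Finset α) (q : ℝ) :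
    ∑ S, bernoulliWeight p S * q ^ (S ∩ A).card = ∏ a ∈ A, (1 - p a * (1 - q)) := by
  have hprod : ∀ S : Finset α,
      q ^ (S ∩ A).card = ∏ a, (if a ∈ S then (if a ∈ A then q else 1) else 1) := by
    intro S
    rw [Fintype.prod_ite_mem, Finset.prod_ite_mem, Finset.prod_const]
  rw [Finset.sum_congr rfl fun S _ => by rw [hprod S], sum_bernoulliWeight_mul_prod_ite,
    ← Fintype.prod_ite_mem A]
  refine Finset.prod_congr rfl fun a _ => ?_
  split_ifs <;> ring

lemma sum_bernoulliWeight_filter_trace_eq {ι : β → α} (hι : ι.Injective) (p : α → ℝ)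
    (T : Finset β) :
    ∑ S with Finset.univ.filter (fun b => ι b ∈ S) = T, bernoulliWeight p S
      = bernoulliWeight (p ∘ ι) T := by
  set X : α → ℝ := fun a => if ∀ b, ι b = a → b ∈ T then 1 else 0
  set Y : α → ℝ := fun a => if ∀ b, ι b = a → b ∉ T then 1 else 0
  have hprod : ∀ S : Finset α, ∏ a, (if a ∈ S then X a else Y a)
      = if Finset.univ.filter (fun b => ι b ∈ S) = T then 1 else 0 := by
    intro S
    have hfac : ∀ a, (if a ∈ S then X a else Y a)
        = if ∀ b, ι b = a → (ι b ∈ S ↔ b ∈ T) then 1 else 0 := by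
      intro a
      by_cases ha : a ∈ S <;> simp only [ha, X, Y, if_true, if_false] <;> congr 1 <;> grind
    rw [Finset.prod_congr rfl fun a _ => hfac a, Fintype.prod_boole]
    refine if_congr ?_ rfl rfl
    simp only [Finset.ext_iff, Finset.mem_filter, Finset.mem_univ, true_and]
    grind
  have hfactor : ∀ b, p (ι b) * X (ι b) + (1 - p (ι b)) * Y (ι b)
      = if b ∈ T then p (ι b) else 1 - p (ι b) := by
    intro b
    have hX : X (ι b) = if b ∈ T then 1 else 0 := by simp [X, hι.eq_iff]
    have hY : Y (ι b) = if b ∈ T then 0 else 1 := by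
      by_cases hb : b ∈ T <;> simp [Y, hι.eq_iff, hb]
    rw [hX, hY]
    split_ifs <;> ring
  rw [Finset.sum_filter,
    Finset.sum_congr rfl fun S _ => by rw [← mul_boole, ← hprod S],
    sum_bernoulliWeight_mul_prod_ite, bernoulliWeight_eq_prod]
  refine (Fintype.prod_of_injective ι hι _ _ (fun a ha => ?_) fun b => (hfactor b).symm).symm
  have hna : ∀ b, ι b ≠ a := fun b hb => ha ⟨b, hb⟩
  simp [X, Y, hna]

lemma sum_bernoulliWeight_mul_trace {ι : β → α}
    (hι : ι.Injective) (p : α → ℝ) (g : Finset β → ℝ) :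
    ∑ S, bernoulliWeight p S * g (Finset.univ.filter fun b => ι b ∈ S)
      = ∑ T, bernoulliWeight (p ∘ ι) T * g T := by
  rw [← Finset.sum_fiberwise Finset.univ fun S => Finset.univ.filter fun b => ι b ∈ S]
  refine Finset.sum_congr rfl fun T _ => ?_
  rw [Finset.sum_congr rfl fun S hS => by rw [(Finset.mem_filter.1 hS).2], ← Finset.sum_mul,
    sum_bernoulliWeight_filter_trace_eq hι]

end Bernoulli

section BestSum

variable {β : Type*}

lemma sum_le_bestSum_s16 {S T : Finset β} {K : ℕ} (w : β → ℝ) (hT : T ⊆ S) (hK : T.card ≤ K) :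
    ∑ b ∈ T, w b ≤ bestSum S K w :=
  Finset.le_sup' (f := fun T => ∑ b ∈ T, w b) (by simpa using ⟨hT, hK⟩)

lemma bestSum_nonneg_s16 (S : Finset β) (K : ℕ) (w : β → ℝ) : 0 ≤ bestSum S K w := by
  simpa using sum_le_bestSum_s16 w (Finset.empty_subset S) (Nat.zero_le K)

lemma exists_eq_bestSum (S : Finset β) (K : ℕ) (w : β → ℝ) :
    ∃ T ⊆ S, T.card ≤ K ∧ bestSum S K w = ∑ b ∈ T, w b := by
  obtain ⟨T, hT, hval⟩ := Finset.exists_mem_eq_sup' (s := S.powerset.filter fun T => T.card ≤ K)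
    ⟨∅, by simp⟩ fun T => ∑ b ∈ T, w b
  rw [Finset.mem_filter, Finset.mem_powerset] at hT
  exact ⟨T, hT.1, hT.2, hval⟩

lemma bestSum_empty (K : ℕ) (w : β → ℝ) : bestSum ∅ K w = 0 := by
  obtain ⟨T, hT, -, hval⟩ := exists_eq_bestSum ∅ K w
  rw [hval, Finset.subset_empty.1 hT, Finset.sum_empty]

/-- An optimal selection for `w` may be assumed inside `A`; enlarge it within `S ∩ A` to
`min #(S ∩ A) K` elements, each of which gains `c`. -/
lemma bestSum_add_mul_min_le [DecidableEq β] {S A : Finset β} {K : ℕ} {w : β → ℝ} {c : ℝ}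
    (hc : 0 ≤ c) (hw : ∀ b, 0 ≤ w b) (hwA : ∀ b ∉ A, w b = 0) :
    bestSum S K w + c * (min (S ∩ A).card K : ℕ)
      ≤ bestSum S K fun b => w b + if b ∈ A then c else 0 := by
  obtain ⟨T, hTS, hTK, hTval⟩ := exists_eq_bestSum S K w
  have hTA : ∑ b ∈ T ∩ A, w b = ∑ b ∈ T, w b :=
    Finset.sum_subset Finset.inter_subset_left fun b hbT hb =>
      hwA b fun hbA => hb (Finset.mem_inter.2 ⟨hbT, hbA⟩)
  obtain ⟨U, hTU, hUSA, hUcard⟩ := Finset.exists_subsuperset_card_eq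
    (Finset.inter_subset_inter_right hTS) (le_max_left _ (min (S ∩ A).card K))
    (max_le (Finset.card_le_card (Finset.inter_subset_inter_right hTS)) (min_le_left _ _))
  have hUK : U.card ≤ K := hUcard ▸ max_le
    ((Finset.card_le_card Finset.inter_subset_left).trans hTK) (min_le_right _ _)
  have hUm : ((min (S ∩ A).card K : ℕ) : ℝ) ≤ U.card := by
    exact_mod_cast hUcard ▸ le_max_right _ _
  calc bestSum S K w + c * (min (S ∩ A).card K : ℕ)
      ≤ ∑ b ∈ U, w b + c * U.card := by
        rw [hTval, ← hTA]
        exact add_le_add (Finset.sum_le_sum_of_subset_of_nonneg hTU fun b _ _ => hw b)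
          (mul_le_mul_of_nonneg_left hUm hc)
    _ = ∑ b ∈ U, (w b + if b ∈ A then c else 0) := by
        rw [Finset.sum_add_distrib, Finset.sum_congr rfl fun b hb =>
          if_pos (Finset.mem_inter.1 (hUSA hb)).2, Finset.sum_const, nsmul_eq_mul, mul_comm c]
    _ ≤ _ := sum_le_bestSum_s16 _ (hUSA.trans Finset.inter_subset_left) hUK

end BestSum

lemma one_sub_inv_exp_nonneg : 0 ≤ 1 - (Real.exp 1)⁻¹ :=
  sub_nonneg.2 (inv_le_one_of_one_le₀ (Real.one_le_exp zero_le_one))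

lemma one_sub_inv_exp_mul_le_one_sub_exp_neg {u : ℝ} (h0 : 0 ≤ u) (h1 : u ≤ 1) :
    (1 - (Real.exp 1)⁻¹) * u ≤ 1 - Real.exp (-u) := by
  have h := convexOn_exp.2 (Set.mem_univ 0) (Set.mem_univ (-1)) (sub_nonneg.2 h1) h0
    (sub_add_cancel 1 u)
  simp only [smul_eq_mul, mul_zero, zero_add, mul_neg_one, Real.exp_zero, mul_one,
    Real.exp_neg] at h
  rw [Real.exp_neg]
  linarith

lemma mul_one_sub_pow_le_min {K : ℕ} (hK : 0 < K) (n : ℕ) :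
    (K : ℝ) * (1 - (1 - 1 / (K : ℝ)) ^ n) ≤ (min n K : ℕ) := by
  have hK1 : (1 : ℝ) ≤ K := by exact_mod_cast hK
  have hq : 0 ≤ 1 - 1 / (K : ℝ) := sub_nonneg.2 ((div_le_one (by positivity)).2 hK1)
  rcases le_total n K with h | h
  · have hbern := one_add_mul_le_pow (a := -(1 / (K : ℝ))) (by linarith) n
    rw [min_eq_left h, ← sub_eq_add_neg] at *
    have : (K : ℝ) * (n * (1 / K)) = n := by field_simp
    nlinarith
  · rw [min_eq_right h]
    nlinarith [pow_nonneg hq n]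

section Correlation

variable {β : Type*} [Fintype β] [DecidableEq β]

lemma one_sub_inv_exp_mul_sum_le_sum_bernoulliWeight_mul_min {p y : β → ℝ} {K : ℕ}
    (hp : ∀ b, p b ≤ 1) (hy : ∀ b, 0 ≤ y b ∧ y b ≤ p b) (A : Finset β)
    (hs : ∑ b ∈ A, y b ≤ K) :
    (1 - (Real.exp 1)⁻¹) * ∑ b ∈ A, y b ≤
      ∑ S, bernoulliWeight p S * (min (S ∩ A).card K : ℕ) := by
  have hs0 : 0 ≤ ∑ b ∈ A, y b := Finset.sum_nonneg fun b _ => (hy b).1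
  rcases Nat.eq_zero_or_pos K with rfl | hK
  · simp [le_antisymm (by simpa using hs) hs0]
  have hK0 : (0 : ℝ) < K := by exact_mod_cast hK
  have hKinv : 1 / (K : ℝ) ≤ 1 := (div_le_one hK0).2 (by exact_mod_cast hK)
  set q := 1 - 1 / (K : ℝ)
  have hprod : ∏ b ∈ A, (1 - p b * (1 - q)) ≤ Real.exp (-((∑ b ∈ A, y b) / K)) := by
    rw [Finset.sum_div, ← Finset.sum_neg_distrib, Real.exp_sum, sub_sub_cancel]
    refine Finset.prod_le_prod (fun b _ => ?_) fun b _ => ?_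
    · exact sub_nonneg.2 (mul_le_one₀ (hp b) (by positivity) hKinv)
    · have hyp : y b / K ≤ p b * (1 / K) := by
        rw [div_eq_mul_one_div]; gcongr; exact (hy b).2
      linarith [Real.add_one_le_exp (-(y b / K))]
  calc (1 - (Real.exp 1)⁻¹) * ∑ b ∈ A, y b
      = K * ((1 - (Real.exp 1)⁻¹) * ((∑ b ∈ A, y b) / K)) := by field_simp
    _ ≤ K * (1 - ∏ b ∈ A, (1 - p b * (1 - q))) := by
        gcongr
        exact (one_sub_inv_exp_mul_le_one_sub_exp_neg (by positivity) ((div_le_one hK0).2 hs)).trans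
          (by linarith)
    _ = K * (∑ S, bernoulliWeight p S - ∑ S, bernoulliWeight p S * q ^ (S ∩ A).card) := by
        rw [sum_bernoulliWeight, sum_bernoulliWeight_mul_pow_card_inter]
    _ = ∑ S, bernoulliWeight p S * (K * (1 - q ^ (S ∩ A).card)) := by
        rw [← Finset.sum_sub_distrib, Finset.mul_sum]
        exact Finset.sum_congr rfl fun S _ => by ring
    _ ≤ ∑ S, bernoulliWeight p S * (min (S ∩ A).card K : ℕ) :=
        Finset.sum_le_sum fun S _ => mul_le_mul_of_nonneg_left (mul_one_sub_pow_le_min hK _)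
          (bernoulliWeight_nonneg (fun b => ⟨(hy b).1.trans (hy b).2, hp b⟩) S)

def expectedBestSum (p : β → ℝ) (K : ℕ) (w : β → ℝ) : ℝ :=
  ∑ S, bernoulliWeight p S * bestSum S K w

lemma expectedBestSum_add_mul_min_le {p w : β → ℝ} {K : ℕ} {A : Finset β} {c : ℝ}
    (hP : ∀ S, 0 ≤ bernoulliWeight p S) (hc : 0 ≤ c) (hw : ∀ b, 0 ≤ w b)
    (hwA : ∀ b ∉ A, w b = 0) :
    expectedBestSum p K w + c * ∑ S, bernoulliWeight p S * (min (S ∩ A).card K : ℕ)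
      ≤ expectedBestSum p K fun b => w b + if b ∈ A then c else 0 := by
  rw [expectedBestSum, expectedBestSum, Finset.mul_sum, ← Finset.sum_add_distrib]
  refine Finset.sum_le_sum fun S _ => ?_
  rw [mul_left_comm, ← mul_add]
  exact mul_le_mul_of_nonneg_left (bestSum_add_mul_min_le hc hw hwA) (hP S)

/-- The correlation gap of the weighted rank function of a uniform matroid is `1 - 1/e`. -/
theorem one_sub_inv_exp_mul_le_expectedBestSum {p w y : β → ℝ} {K : ℕ} (hp : ∀ b, p b ≤ 1)
    (hw : ∀ b, 0 ≤ w b) (hy : ∀ b, 0 ≤ y b ∧ y b ≤ p b) (hs : ∑ b, y b ≤ K) :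
    (1 - (Real.exp 1)⁻¹) * ∑ b, w b * y b ≤ expectedBestSum p K w := by
  have hP : ∀ S, 0 ≤ bernoulliWeight p S :=
    bernoulliWeight_nonneg fun b => ⟨(hy b).1.trans (hy b).2, hp b⟩
  induction hn : (Finset.univ.filter fun b => w b ≠ 0).card using Nat.strong_induction_on
    generalizing w with
  | _ n ih =>
  set A := Finset.univ.filter fun b => w b ≠ 0
  have hwA : ∀ b ∉ A, w b = 0 := fun b hb => by simpa [A] using hb
  rcases A.eq_empty_or_nonempty with hA | hA
  · have hw0 : ∀ b, w b = 0 := fun b => hwA b (hA ▸ Finset.notMem_empty b)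
    simpa [hw0, expectedBestSum] using
      Finset.sum_nonneg fun S _ => mul_nonneg (hP S) (bestSum_nonneg_s16 S K w)
  -- peel off the smallest nonzero weight `c` from every element of the support
  obtain ⟨b₀, hb₀, hmin⟩ := A.exists_min_image w hA
  set c := w b₀
  have hc : 0 < c := (hw b₀).lt_of_ne' (Finset.mem_filter.1 hb₀).2
  set w' : β → ℝ := fun b => if b ∈ A then w b - c else 0
  have hw' : ∀ b, 0 ≤ w' b := fun b => by
    by_cases hb : b ∈ A <;> simp [w', hb, hmin b]
  have hw'A : ∀ b ∉ A, w' b = 0 := fun b hb => if_neg hb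
  have hdec : w = fun b => w' b + if b ∈ A then c else 0 := funext fun b => by
    by_cases hb : b ∈ A <;> simp [w', hb, hwA]
  have hcard : (Finset.univ.filter fun b => w' b ≠ 0).card < n := by
    refine hn ▸ Finset.card_lt_card ⟨fun b hb => ?_, fun h => ?_⟩
    · by_contra hbA
      exact (Finset.mem_filter.1 hb).2 (hw'A b hbA)
    · simpa [w', hb₀, c] using h hb₀
  have hyA : ∑ b ∈ A, y b ≤ K :=
    (Finset.sum_le_sum_of_subset_of_nonneg (Finset.subset_univ A) fun b _ _ => (hy b).1).trans hs
  calc (1 - (Real.exp 1)⁻¹) * ∑ b, w b * y b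
      = (1 - (Real.exp 1)⁻¹) * ∑ b, w' b * y b
          + c * ((1 - (Real.exp 1)⁻¹) * ∑ b ∈ A, y b) := by
        rw [hdec]
        simp only [add_mul, ite_mul, zero_mul, Finset.sum_add_distrib, Finset.sum_ite_mem,
          Finset.univ_inter, ← Finset.mul_sum]
        ring
    _ ≤ expectedBestSum p K w'
          + c * ∑ S, bernoulliWeight p S * (min (S ∩ A).card K : ℕ) :=
        add_le_add (ih _ hcard hw' rfl) (mul_le_mul_of_nonneg_left
          (one_sub_inv_exp_mul_sum_le_sum_bernoulliWeight_mul_min hp hy A hyA) hc.le)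
    _ ≤ expectedBestSum p K w := hdec ▸ expectedBestSum_add_mul_min_le hP hc.le hw' hw'A

lemma exists_marginals_eq_expectedBestSum {p : β → ℝ} (hp : ∀ b, 0 ≤ p b ∧ p b ≤ 1)
    (K : ℕ) (w : β → ℝ) :
    ∃ y : β → ℝ, (∀ b, 0 ≤ y b ∧ y b ≤ p b) ∧ ∑ b, y b ≤ K ∧
      ∑ b, w b * y b = expectedBestSum p K w := by
  choose T hTS hTK hT using fun S : Finset β => exists_eq_bestSum S K w
  have hP := bernoulliWeight_nonneg hp
  refine ⟨fun b => ∑ S, bernoulliWeight p S * if b ∈ T S then 1 else 0, fun b => ⟨?_, ?_⟩, ?_, ?_⟩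
  · exact Finset.sum_nonneg fun S _ => mul_nonneg (hP S) (by split_ifs <;> norm_num)
  · rw [← sum_bernoulliWeight_mul_ite_mem p b]
    refine Finset.sum_le_sum fun S _ => mul_le_mul_of_nonneg_left ?_ (hP S)
    by_cases hb : b ∈ T S
    · simp [hb, hTS S hb]
    · split_ifs <;> norm_num
  · calc ∑ b, ∑ S, bernoulliWeight p S * (if b ∈ T S then 1 else 0)
        = ∑ S, bernoulliWeight p S * (T S).card := by
          rw [Finset.sum_comm]
          refine Finset.sum_congr rfl fun S _ => ?_
          rw [← Finset.mul_sum, Fintype.sum_ite_mem, Finset.sum_const, nsmul_one]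
      _ ≤ ∑ S, bernoulliWeight p S * K :=
          Finset.sum_le_sum fun S _ => mul_le_mul_of_nonneg_left (by exact_mod_cast hTK S) (hP S)
      _ = K := by rw [← Finset.sum_mul, sum_bernoulliWeight, one_mul]
  · simp only [Finset.mul_sum, expectedBestSum, hT]
    rw [Finset.sum_comm]
    refine Finset.sum_congr rfl fun S _ => ?_
    rw [← Fintype.sum_ite_mem (T S)]
    exact Finset.sum_congr rfl fun b _ => by split_ifs <;> ring

end Correlation

lemma backlogI_eq_empty {I J : Type*} [Fintype J] {x B : Finset (Arc I J)}
    (hx : ∀ a ∈ x, ∃ e : I × J, a = Sum.inl e) (hB : B ⊆ x) (i : I) : backlogI B i = ∅ :=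
  Finset.eq_empty_of_forall_notMem fun j hj => by
    obtain ⟨e, he⟩ := hx _ (hB (Finset.mem_filter.1 hj).2)
    cases he

section OneDirectional

variable {I J : Type*} [Fintype I] [Fintype J]

/-- When only users in `I` initiate, the backlog of user `j ∈ J` is an independent sample of `I`,
each `i` being present with probability `φ¹_{i,j} x_{i,j}`. -/
lemma M2_eq_sum_expectedBestSum (φ1 φ2 : Arc I J → ℝ) (K : I ⊕ J → ℕ) {x : Finset (Arc I J)}
    (hx : ∀ a ∈ x, ∃ e : I × J, a = Sum.inl e) :
    M2 φ1 φ2 K x = ∑ j, expectedBestSum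
      (fun i => if Sum.inl (i, j) ∈ x then φ1 (Sum.inl (i, j)) else 0) (K (Sum.inr j))
      (fun i => φ2 (Sum.inr (j, i))) := by
  set p : Arc I J → ℝ := fun a => if a ∈ x then φ1 a else 0
  have hterm : ∀ B, fval φ2 K B * probOf φ1 x B = ∑ j, bernoulliWeight p B *
      bestSum (backlogJ B j) (K (Sum.inr j)) (fun i => φ2 (Sum.inr (j, i))) := by
    intro B
    have hprob : probOf φ1 x B = bernoulliWeight p B := rfl
    rw [hprob]
    by_cases hB : B ⊆ x
    · rw [fval, Finset.sum_eq_zero fun i _ => by rw [backlogI_eq_empty hx hB, bestSum_empty],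
        zero_add, Finset.sum_mul]
      exact Finset.sum_congr rfl fun j _ => mul_comm _ _
    · obtain ⟨a, haB, hax⟩ := Finset.not_subset.1 hB
      have hP : bernoulliWeight p B = 0 :=
        mul_eq_zero_of_left (Finset.prod_eq_zero haB (if_neg hax)) _
      simp [hP]
  rw [M2, Finset.sum_congr rfl fun B _ => hterm B, Finset.sum_comm]
  exact Finset.sum_congr rfl fun j _ =>
    sum_bernoulliWeight_mul_trace (ι := fun i => Sum.inl (i, j)) (fun _ _ h => by simpa using h) p
      fun T => bestSum T (K (Sum.inr j)) fun i => φ2 (Sum.inr (j, i))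

lemma card_filter_fst_le_outdegX (x : Finset (Arc I J)) (i : I) :
    ((Finset.univ.filter fun e : I × J => Sum.inl e ∈ x).filter fun e => e.1 = i).card
      ≤ outdegX x (Sum.inl i) :=
  Finset.card_le_card_of_injOn Sum.inl (fun e he => by
      obtain ⟨hx, rfl⟩ := by simpa using he
      exact Finset.mem_filter.2 ⟨hx, rfl⟩)
    Sum.inl_injective.injOn

/-- `y_{j,i}` is the probability that `j` ends up matched with `i` in the second period. -/
lemma exists_feasible_eq_M2 (φ2 : Arc I J → ℝ) (K : I ⊕ J → ℕ) {φ1 : Arc I J → ℝ}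
    (hφ1 : ∀ a, 0 ≤ φ1 a ∧ φ1 a ≤ 1) {x : Finset (Arc I J)}
    (hx : ∀ a ∈ x, ∃ e : I × J, a = Sum.inl e)
    (hdeg : ∀ i : I, outdegX x (Sum.inl i) ≤ K (Sum.inl i)) :
    ∃ (x' : Finset (I × J)) (y : J × I → ℝ),
      (∀ i : I, (x'.filter fun e => e.1 = i).card ≤ K (Sum.inl i)) ∧
      (∀ q : J × I, 0 ≤ y q ∧ y q ≤ 1) ∧
      (∀ (j : J) (i : I), y (j, i) ≤ φ1 (Sum.inl (i, j)) * (if (i, j) ∈ x' then 1 else 0)) ∧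
      (∀ j : J, (∑ i : I, y (j, i)) ≤ (K (Sum.inr j) : ℝ)) ∧
      ∑ q : J × I, φ2 (Sum.inr q) * y q = M2 φ1 φ2 K x := by
  have hp : ∀ j i, 0 ≤ (if Sum.inl (i, j) ∈ x then φ1 (Sum.inl (i, j)) else 0) ∧
      (if Sum.inl (i, j) ∈ x then φ1 (Sum.inl (i, j)) else 0) ≤ 1 := fun j i => by
    split_ifs
    exacts [hφ1 _, ⟨le_rfl, zero_le_one⟩]
  choose y hy hyK hyw using fun j =>
    exists_marginals_eq_expectedBestSum (hp j) (K (Sum.inr j)) fun i => φ2 (Sum.inr (j, i))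
  refine ⟨Finset.univ.filter fun e => Sum.inl e ∈ x, fun q => y q.1 q.2,
    fun i => (card_filter_fst_le_outdegX x i).trans (hdeg i),
    fun q => ⟨(hy q.1 q.2).1, (hy q.1 q.2).2.trans (hp q.1 q.2).2⟩, fun j i => ?_, hyK, ?_⟩
  · simpa [apply_ite, ite_mul] using (hy j i).2
  · rw [M2_eq_sum_expectedBestSum φ1 φ2 K hx, Fintype.sum_prod_type]
    exact Finset.sum_congr rfl fun j _ => hyw j

lemma one_sub_inv_exp_mul_le_M2 {φ1 φ2 : Arc I J → ℝ} {K : I ⊕ J → ℕ}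
    (hφ1 : ∀ a, φ1 a ≤ 1) (hφ2 : ∀ a, 0 ≤ φ2 a) {xs : Finset (I × J)} {ys : J × I → ℝ}
    (hys0 : ∀ q, 0 ≤ ys q)
    (hys1 : ∀ (j : J) (i : I),
      ys (j, i) ≤ φ1 (Sum.inl (i, j)) * (if (i, j) ∈ xs then 1 else 0))
    (hys2 : ∀ j : J, (∑ i : I, ys (j, i)) ≤ (K (Sum.inr j) : ℝ)) :
    (1 - (Real.exp 1)⁻¹) * ∑ q : J × I, φ2 (Sum.inr q) * ys q
      ≤ M2 φ1 φ2 K (xs.image fun e => (Sum.inl e : Arc I J)) := by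
  rw [M2_eq_sum_expectedBestSum φ1 φ2 K (by simp), Fintype.sum_prod_type, Finset.mul_sum]
  refine Finset.sum_le_sum fun j _ => one_sub_inv_exp_mul_le_expectedBestSum
    (fun i => ?_) (fun i => hφ2 _) (fun i => ⟨hys0 _, ?_⟩) (hys2 j)
  · split_ifs
    exacts [hφ1 _, zero_le_one]
  · simpa [apply_ite, ite_mul] using hys1 j i

end OneDirectional

theorem DH_oneDirectional_guarantee_general
    {I J : Type*} [Fintype I] [Fintype J]
    (φ1 φ2 : Arc I J → ℝ)
    (hφ1 : ∀ a, 0 ≤ φ1 a ∧ φ1 a ≤ 1) (hφ2 : ∀ a, 0 ≤ φ2 a ∧ φ2 a ≤ 1)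
    (K : I ⊕ J → ℕ)
    (xs : Finset (I × J)) (ys : J × I → ℝ)
    (hys0 : ∀ q : J × I, 0 ≤ ys q ∧ ys q ≤ 1)
    (hys1 : ∀ (j : J) (i : I),
      ys (j, i) ≤ φ1 (Sum.inl (i, j)) * (if (i, j) ∈ xs then 1 else 0))
    (hys2 : ∀ j : J, (∑ i : I, ys (j, i)) ≤ (K (Sum.inr j) : ℝ))
    (hopt : ∀ (x : Finset (I × J)) (y : J × I → ℝ),
      (∀ i : I, (x.filter fun e => e.1 = i).card ≤ K (Sum.inl i)) →
      (∀ q : J × I, 0 ≤ y q ∧ y q ≤ 1) →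
      (∀ (j : J) (i : I),
        y (j, i) ≤ φ1 (Sum.inl (i, j)) * (if (i, j) ∈ x then 1 else 0)) →
      (∀ j : J, (∑ i : I, y (j, i)) ≤ (K (Sum.inr j) : ℝ)) →
      (∑ q : J × I, φ2 (Sum.inr q) * y q) ≤ ∑ q : J × I, φ2 (Sum.inr q) * ys q) :
    ∀ x : Finset (Arc I J),
      (∀ a ∈ x, ∃ e : I × J, a = Sum.inl e) →
      (∀ i : I, outdegX x (Sum.inl i) ≤ K (Sum.inl i)) →
      (1 - (Real.exp 1)⁻¹) * M2 φ1 φ2 K x ≤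
        M2 φ1 φ2 K (xs.image fun e => (Sum.inl e : Arc I J)) := by
  intro x hx hdeg
  obtain ⟨x', y, hx', hy, hyx', hyK, hM2⟩ := exists_feasible_eq_M2 φ2 K hφ1 hx hdeg
  calc (1 - (Real.exp 1)⁻¹) * M2 φ1 φ2 K x
      = (1 - (Real.exp 1)⁻¹) * ∑ q : J × I, φ2 (Sum.inr q) * y q := by rw [hM2]
    _ ≤ (1 - (Real.exp 1)⁻¹) * ∑ q : J × I, φ2 (Sum.inr q) * ys q :=
        mul_le_mul_of_nonneg_left (hopt x' y hx' hy hyx' hyK) one_sub_inv_exp_nonneg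
    _ ≤ M2 φ1 φ2 K (xs.image fun e => (Sum.inl e : Arc I J)) :=
        one_sub_inv_exp_mul_le_M2 (fun a => (hφ1 a).2) (fun a => (hφ2 a).1)
          (fun q => (hys0 q).1) hys1 hys2

/-- in the one-directional sequential design, an optimal solution of the
(restricted) DH relaxation achieves a `1 - 1/e` approximation guarantee. -/
theorem DH_oneDirectional_guarantee
    {I J : Type*} [Fintype I] [Fintype J]
    (φ1 φ2 : Arc I J → ℝ)
    (hφ1 : ∀ a, 0 ≤ φ1 a ∧ φ1 a ≤ 1) (hφ2 : ∀ a, 0 ≤ φ2 a ∧ φ2 a ≤ 1)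
    (K : I ⊕ J → ℕ)
    (xs : Finset (I × J)) (ys : J × I → ℝ)
    (hxs : ∀ i : I, (xs.filter fun e => e.1 = i).card ≤ K (Sum.inl i))
    (hys0 : ∀ q : J × I, 0 ≤ ys q ∧ ys q ≤ 1)
    (hys1 : ∀ (j : J) (i : I),
      ys (j, i) ≤ φ1 (Sum.inl (i, j)) * (if (i, j) ∈ xs then 1 else 0))
    (hys2 : ∀ j : J, (∑ i : I, ys (j, i)) ≤ (K (Sum.inr j) : ℝ))
    (hopt : ∀ (x : Finset (I × J)) (y : J × I → ℝ),
      (∀ i : I, (x.filter fun e => e.1 = i).card ≤ K (Sum.inl i)) →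
      (∀ q : J × I, 0 ≤ y q ∧ y q ≤ 1) →
      (∀ (j : J) (i : I),
        y (j, i) ≤ φ1 (Sum.inl (i, j)) * (if (i, j) ∈ x then 1 else 0)) →
      (∀ j : J, (∑ i : I, y (j, i)) ≤ (K (Sum.inr j) : ℝ)) →
      (∑ q : J × I, φ2 (Sum.inr q) * y q) ≤ ∑ q : J × I, φ2 (Sum.inr q) * ys q) :
    ∀ x : Finset (Arc I J),
      (∀ a ∈ x, ∃ e : I × J, a = Sum.inl e) →
      (∀ i : I, outdegX x (Sum.inl i) ≤ K (Sum.inl i)) →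
      (1 - (Real.exp 1)⁻¹) * M2 φ1 φ2 K x ≤
        M2 φ1 φ2 K (xs.image fun e => (Sum.inl e : Arc I J)) :=
  DH_oneDirectional_guarantee_general φ1 φ2 hφ1 hφ2 K xs ys hys0 hys1 hys2 hopt
end
end
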